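/- arXiv:1211.2136 — 5 statements merged into one kernel-verified Lean document; each statement's English description precedes it below -/
import Mathlib

section
/- Let p be an odd positive integer and f : ℝ → ℝ a continuous function. If y : ℝ × ℝ → ℝ is a smooth solution of the derivative wave equation y_tt − y_xx = (y_x)^p + f(y) on ℝ × 𝕋 (i.e. 2π-periodic in x) which is quasi-periodic in time, then y does not depend on the space variable, i.e. y_x ≡ 0, so y(t, x) = c(t). Moreover, if f ≡ 0 then y is constant. -/
open Real MeasureTheory


/-- Partial derivative in time of `y : ℝ × ℝ → ℝ`, `y = y (t, x)`. -/
noncomputable def ptime (y : ℝ × ℝ → ℝ) (t x : ℝ) : ℝ :=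
  deriv (fun s => y (s, x)) t

/-- Partial derivative in space of `y : ℝ × ℝ → ℝ`, `y = y (t, x)`. -/
noncomputable def pspace (y : ℝ × ℝ → ℝ) (t x : ℝ) : ℝ :=
  deriv (fun s => y (t, s)) x

/-- Second partial derivative in time. -/
noncomputable def ptime2 (y : ℝ × ℝ → ℝ) (t x : ℝ) : ℝ :=
  deriv (fun s => ptime y s x) t

/-- Second partial derivative in space. -/
noncomputable def pspace2 (y : ℝ × ℝ → ℝ) (t x : ℝ) : ℝ :=
  deriv (fun s => pspace y t s) x

/-- `y (t, x)` is quasi-periodic in time: `y (t, x) = F (ω t, x)` for a smooth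
function `F` which is `2π`-periodic in each of its arguments. -/
def QuasiPeriodicInTime (y : ℝ × ℝ → ℝ) : Prop :=
  ∃ (m : ℕ) (ω : Fin m → ℝ) (F : (Fin m → ℝ) × ℝ → ℝ),
    ContDiff ℝ (⊤ : ℕ∞) F ∧
    (∀ (θ : Fin m → ℝ) (x : ℝ) (i : Fin m),
        F (θ + (2 * Real.pi) • (Pi.single i 1 : Fin m → ℝ), x) = F (θ, x)) ∧
    (∀ (θ : Fin m → ℝ) (x : ℝ), F (θ, x + 2 * Real.pi) = F (θ, x)) ∧
    (∀ t x : ℝ, y (t, x) = F (fun i => ω i * t, x))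

lemma latticeShift {m : ℕ} (g : (Fin m → ℝ) → ℝ)
    (h : ∀ (θ : Fin m → ℝ) (i : Fin m), g (θ + (2 * Real.pi) • (Pi.single i 1 : Fin m → ℝ)) = g θ)
    (θ : Fin m → ℝ) (k : Fin m → ℤ) :
    g (θ + fun i => 2 * Real.pi * k i) = g θ := by
  set S : AddSubgroup (Fin m → ℝ) :=
    { carrier := {v | ∀ θ : Fin m → ℝ, g (θ + v) = g θ}
      zero_mem' := by intro θ; simp
      add_mem' := by
        intro v w hv hw θ
        rw [← add_assoc, hw, hv]
      neg_mem' := by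
        intro v hv θ
        have := hv (θ + -v)
        rw [add_assoc, neg_add_cancel, add_zero] at this
        rw [this] } with hS
  have hgen : ∀ i : Fin m, ((2 * Real.pi) • (Pi.single i 1 : Fin m → ℝ)) ∈ S := by
    intro i θ'; exact h θ' i
  have hmem : (fun i => 2 * Real.pi * k i : Fin m → ℝ) ∈ S := by
    have heqv : (fun i => 2 * Real.pi * k i : Fin m → ℝ)
        = ∑ i : Fin m, (k i) • ((2 * Real.pi) • (Pi.single i 1 : Fin m → ℝ)) := by
      funext j
      rw [Finset.sum_apply]
      have h2 : ∀ i : Fin m, ((k i) • ((2 * Real.pi) • (Pi.single i 1 : Fin m → ℝ))) j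
          = (Pi.single i (2 * Real.pi * k i) : Fin m → ℝ) j := by
        intro i
        rcases eq_or_ne i j with rfl | hij
        · simp [mul_comm]
        · simp [Pi.single_eq_of_ne' hij, Pi.single_eq_of_ne hij]
      simp only [h2]
      rw [Finset.sum_pi_single]
      simp
    rw [heqv]
    exact AddSubgroup.sum_mem S (fun i _ => AddSubgroup.zsmul_mem S (hgen i) (k i))
  exact hmem θ
lemma exists_recurrence {m : ℕ} (ω : Fin m → ℝ) {δ : ℝ} (hδ : 0 < δ) (T : ℝ) :
    ∃ τ : ℝ, T ≤ τ ∧ ∃ k : Fin m → ℤ, ∀ i, |ω i * τ - 2 * Real.pi * k i| < δ := by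
  obtain ⟨N, hN⟩ := exists_nat_ge (max T 1)
  have hN1 : (1 : ℝ) ≤ N := le_trans (le_max_right _ _) hN
  have hNT : T ≤ N := le_trans (le_max_left _ _) hN
  -- sequence of fractional parts
  set u : ℕ → Fin m → ℝ := fun n i => Int.fract (ω i * (n * N) / (2 * Real.pi)) with hu
  have humem : ∀ n, u n ∈ Set.Icc (0 : Fin m → ℝ) 1 := by
    intro n
    constructor <;> intro i
    · exact Int.fract_nonneg _
    · exact (Int.fract_lt_one _).le
  obtain ⟨x, -, φ, hφ, hconv⟩ := (isCompact_Icc (a := (0 : Fin m → ℝ)) (b := 1)).tendsto_subseq humem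
  set δ' : ℝ := δ / (2 * (2 * Real.pi)) with hδ'
  have hδ'pos : 0 < δ' := by positivity
  have := Metric.tendsto_atTop.1 hconv δ' hδ'pos
  obtain ⟨M, hM⟩ := this
  have h1 : dist (u (φ M)) x < δ' := hM M le_rfl
  have h2 : dist (u (φ (M+1))) x < δ' := hM (M+1) (Nat.le_succ M)
  have hlt : φ M < φ (M + 1) := hφ (Nat.lt_succ_self M)
  set n₁ := φ M
  set n₂ := φ (M + 1)
  refine ⟨((n₂ - n₁ : ℕ) : ℝ) * N, ?_, ?_⟩
  · have : (1 : ℝ) ≤ ((n₂ - n₁ : ℕ) : ℝ) := by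
      exact_mod_cast Nat.one_le_iff_ne_zero.2 (Nat.sub_ne_zero_of_lt hlt)
    calc T ≤ (N : ℝ) := hNT
    _ = 1 * N := (one_mul _).symm
    _ ≤ ((n₂ - n₁ : ℕ) : ℝ) * N := by
        apply mul_le_mul_of_nonneg_right this (le_trans zero_le_one hN1)
  · refine ⟨fun i => ⌊ω i * (n₂ * N) / (2 * Real.pi)⌋ - ⌊ω i * (n₁ * N) / (2 * Real.pi)⌋, ?_⟩
    intro i
    have hdist : dist (u n₂ i) (u n₁ i) < 2 * δ' := by
      calc dist (u n₂ i) (u n₁ i) ≤ dist (u n₂) (u n₁) := dist_le_pi_dist _ _ i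
      _ ≤ dist (u n₂) x + dist (u n₁) x := dist_triangle_right _ _ _
      _ < δ' + δ' := add_lt_add h2 h1
      _ = 2 * δ' := by ring
    have hfr : u n₂ i - u n₁ i
        = ω i * (((n₂ - n₁ : ℕ) : ℝ) * N) / (2 * Real.pi)
          - (⌊ω i * (n₂ * N) / (2 * Real.pi)⌋ - ⌊ω i * (n₁ * N) / (2 * Real.pi)⌋ : ℤ) := by
      simp only [hu, Int.fract]
      have : ((n₂ - n₁ : ℕ) : ℝ) = (n₂ : ℝ) - n₁ := by
        exact_mod_cast Nat.cast_sub hlt.le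
      rw [this]
      push_cast
      ring
    have h2pi : (0:ℝ) < 2 * Real.pi := by positivity
    have : |ω i * (((n₂ - n₁ : ℕ) : ℝ) * N) / (2 * Real.pi)
        - (⌊ω i * (n₂ * N) / (2 * Real.pi)⌋ - ⌊ω i * (n₁ * N) / (2 * Real.pi)⌋ : ℤ)| < 2 * δ' := by
      rw [← hfr]
      simpa [Real.dist_eq] using hdist
    set k : ℤ := ⌊ω i * (n₂ * N) / (2 * Real.pi)⌋ - ⌊ω i * (n₁ * N) / (2 * Real.pi)⌋ with hk
    have hexp : ω i * (((n₂ - n₁ : ℕ) : ℝ) * N) - 2 * Real.pi * (k : ℝ)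
        = (2 * Real.pi) * (ω i * (((n₂ - n₁ : ℕ) : ℝ) * N) / (2 * Real.pi) - (k : ℝ)) := by
      field_simp
    have habs : |ω i * (((n₂ - n₁ : ℕ) : ℝ) * N) - 2 * Real.pi * (k : ℝ)| < δ := by
      rw [hexp, abs_mul, abs_of_pos h2pi]
      calc 2 * Real.pi * |ω i * (((n₂ - n₁ : ℕ) : ℝ) * N) / (2 * Real.pi) - (k : ℝ)|
          < 2 * Real.pi * (2 * δ') := mul_lt_mul_of_pos_left this h2pi
      _ = δ := by rw [hδ']; field_simp
    exact habs
lemma const_of_monotone_qp {m : ℕ} (ω : Fin m → ℝ) (g : (Fin m → ℝ) → ℝ)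
    (hg : Continuous g)
    (hperi : ∀ (θ : Fin m → ℝ) (i : Fin m),
      g (θ + (2 * Real.pi) • (Pi.single i 1 : Fin m → ℝ)) = g θ)
    (I : ℝ → ℝ) (hI : Monotone I)
    (hrep : ∀ t, I t = g (fun i => ω i * t)) :
    ∀ t t', I t = I t' := by
  have key : ∀ t₁ t₂, t₁ ≤ t₂ → I t₁ = I t₂ := by
    intro t₁ t₂ h12
    by_contra hne
    have hlt : I t₁ < I t₂ := lt_of_le_of_ne (hI h12) hne
    set ε := I t₂ - I t₁ with hε
    have hεpos : 0 < ε := by linarith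
    set θ₁ : Fin m → ℝ := fun i => ω i * t₁ with hθ₁
    obtain ⟨δ, hδpos, hδ⟩ := Metric.continuousAt_iff.1 (hg.continuousAt (x := θ₁)) ε hεpos
    obtain ⟨τ, hτ, k, hk⟩ := exists_recurrence ω hδpos (t₂ - t₁)
    set v : Fin m → ℝ := fun i => ω i * τ - 2 * Real.pi * k i with hv
    have hsplit : (fun i => ω i * (t₁ + τ)) = (θ₁ + v) + fun i => 2 * Real.pi * (k i) := by
      funext i
      simp only [hθ₁, hv, Pi.add_apply]
      ring
    have hval : I (t₁ + τ) = g (θ₁ + v) := by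
      rw [hrep, hsplit, latticeShift g hperi]
    have hdist : dist (θ₁ + v) θ₁ < δ := by
      rw [dist_pi_lt_iff hδpos]
      intro i
      simp only [Pi.add_apply, Real.dist_eq, add_sub_cancel_left]
      exact hk i
    have hclose : dist (g (θ₁ + v)) (g θ₁) < ε := hδ hdist
    have hIθ₁ : I t₁ = g θ₁ := hrep t₁
    have : I (t₁ + τ) < I t₂ := by
      have := abs_lt.1 (by simpa [Real.dist_eq] using hclose)
      rw [hval]
      linarith [this.2, hIθ₁ ▸ (le_refl (I t₁))]
    have : I t₂ ≤ I (t₁ + τ) := hI (by linarith)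
    linarith
  intro t t'
  rcases le_total t t' with h | h
  · exact key _ _ h
  · exact (key _ _ h).symm

lemma fderiv_of_periodic {E : Type*} [NormedAddCommGroup E] [NormedSpace ℝ E]
    (y : E → ℝ) (hy : Differentiable ℝ y) (c : E) (hc : ∀ q, y (q + c) = y q) (q : E) :
    fderiv ℝ y (q + c) = fderiv ℝ y q := by
  have h1 : HasFDerivAt (fun q' => y (q' + c)) (fderiv ℝ y (q + c)) q := by
    have h0 : HasFDerivAt y (fderiv ℝ y (q + c)) (q + c) := (hy (q + c)).hasFDerivAt
    have h2 : HasFDerivAt (fun q' : E => q' + c) (ContinuousLinearMap.id ℝ E) q :=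
      (hasFDerivAt_id q).add_const c
    have h3 := h0.comp q h2
    rw [ContinuousLinearMap.comp_id] at h3
    exact h3
  have h2 : (fun q' => y (q' + c)) = y := funext hc
  rw [h2] at h1
  exact h1.fderiv.symm

lemma hasDerivAt_comp_curve {E : Type*} [NormedAddCommGroup E] [NormedSpace ℝ E]
    (y : E → ℝ) (hy : Differentiable ℝ y) (c : ℝ → E) (c' : E) (t : ℝ)
    (hc : HasDerivAt c c' t) :
    HasDerivAt (fun s => y (c s)) (fderiv ℝ y (c t) c') t :=
  (hy (c t)).hasFDerivAt.comp_hasDerivAt t hc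

lemma zero_of_integral (h : ℝ → ℝ) (hc : Continuous h) (hnn : ∀ x, 0 ≤ h x)
    (hper : Function.Periodic h (2 * Real.pi))
    (hint : ∫ x in (0:ℝ)..2 * Real.pi, h x = 0) : ∀ x, h x = 0 := by
  intro x₀
  by_contra hne
  have hcpos : 0 < h x₀ := lt_of_le_of_ne (hnn x₀) (Ne.symm hne)
  obtain ⟨δ, hδpos, hδ⟩ := Metric.continuousAt_iff.1 (hc.continuousAt (x := x₀)) (h x₀ / 2)
    (by linarith)
  set δ' : ℝ := min (δ / 2) Real.pi with hδ'
  have hδ'pos : 0 < δ' := lt_min (by linarith) Real.pi_pos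
  have hδ'le : δ' ≤ Real.pi := min_le_right _ _
  have hδ'lt : δ' < δ := lt_of_le_of_lt (min_le_left _ _) (by linarith)
  have hshift : (∫ x in (x₀ - Real.pi)..(x₀ - Real.pi + 2 * Real.pi), h x) = 0 := by
    rw [hper.intervalIntegral_add_eq (x₀ - Real.pi) 0]
    simpa using hint
  have hend : x₀ - Real.pi + 2 * Real.pi = x₀ + Real.pi := by ring
  rw [hend] at hshift
  have hi : ∀ a b : ℝ, IntervalIntegrable h MeasureTheory.volume a b :=
    fun a b => hc.intervalIntegrable a b
  have hsplit1 : (∫ x in (x₀ - Real.pi)..(x₀ - δ'), h x) + (∫ x in (x₀ - δ')..(x₀ + Real.pi), h x)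
      = ∫ x in (x₀ - Real.pi)..(x₀ + Real.pi), h x :=
    intervalIntegral.integral_add_adjacent_intervals (hi _ _) (hi _ _)
  have hsplit2 : (∫ x in (x₀ - δ')..(x₀ + δ'), h x) + (∫ x in (x₀ + δ')..(x₀ + Real.pi), h x)
      = ∫ x in (x₀ - δ')..(x₀ + Real.pi), h x :=
    intervalIntegral.integral_add_adjacent_intervals (hi _ _) (hi _ _)
  have h1 : 0 ≤ ∫ x in (x₀ - Real.pi)..(x₀ - δ'), h x :=
    intervalIntegral.integral_nonneg (by linarith) (fun u _ => hnn u)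
  have h2 : 0 ≤ ∫ x in (x₀ + δ')..(x₀ + Real.pi), h x :=
    intervalIntegral.integral_nonneg (by linarith) (fun u _ => hnn u)
  have hmid : (2 * δ') * (h x₀ / 2) ≤ ∫ x in (x₀ - δ')..(x₀ + δ'), h x := by
    have hconst : (∫ _ in (x₀ - δ')..(x₀ + δ'), (h x₀ / 2)) = (2 * δ') * (h x₀ / 2) := by
      rw [intervalIntegral.integral_const]
      simp only [smul_eq_mul]
      ring_nf
    rw [← hconst]
    apply intervalIntegral.integral_mono_on (by linarith) (intervalIntegrable_const) (hi _ _)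
    intro x hx
    have hx1 : |x - x₀| < δ := by
      rw [abs_lt]
      constructor <;> [linarith [hx.1, hδ'lt]; linarith [hx.2, hδ'lt]]
    have := hδ (by simpa [Real.dist_eq] using hx1)
    rw [Real.dist_eq, abs_lt] at this
    linarith [this.1]
  have : 0 < ∫ x in (x₀ - Real.pi)..(x₀ + Real.pi), h x := by
    rw [← hsplit1, ← hsplit2]
    have : 0 < (2 * δ') * (h x₀ / 2) := by positivity
    linarith
  rw [hshift] at this
  exact lt_irrefl 0 this
lemma hasDerivAt_intervalIntegral_param
    (G G' : ℝ × ℝ → ℝ) (hG : Continuous G) (hG' : Continuous G')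
    (hd : ∀ t x, HasDerivAt (fun s => G (s, x)) (G' (t, x)) t) (t₀ : ℝ) :
    HasDerivAt (fun t => ∫ x in (0:ℝ)..2 * Real.pi, G (t, x))
      (∫ x in (0:ℝ)..2 * Real.pi, G' (t₀, x)) t₀ := by
  have hKcomp : IsCompact ((Set.Icc (t₀ - 1) (t₀ + 1)) ×ˢ (Set.uIcc (0:ℝ) (2 * Real.pi))) :=
    isCompact_Icc.prod isCompact_uIcc
  obtain ⟨C, hC⟩ := hKcomp.exists_bound_of_continuousOn hG'.continuousOn
  have key := intervalIntegral.hasDerivAt_integral_of_dominated_loc_of_deriv_le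
    (F := fun t x => G (t, x)) (F' := fun t x => G' (t, x)) (x₀ := t₀)
    (a := (0:ℝ)) (b := 2 * Real.pi) (μ := volume) (bound := fun _ => C)
    (s := Metric.ball t₀ 1) (Metric.ball_mem_nhds t₀ one_pos)
    (Filter.Eventually.of_forall fun t =>
      ((hG.comp (continuous_const.prodMk continuous_id)).aestronglyMeasurable))
    ((hG.comp (continuous_const.prodMk continuous_id)).intervalIntegrable _ _)
    ((hG'.comp (continuous_const.prodMk continuous_id)).aestronglyMeasurable)
    (MeasureTheory.ae_of_all _ (fun x hx t ht => by
      apply hC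
      constructor
      · have : |t - t₀| < 1 := by simpa [Real.dist_eq] using ht
        have := abs_lt.1 this
        exact ⟨by linarith [this.1], by linarith [this.2]⟩
      · exact Set.uIoc_subset_uIcc hx))
    (intervalIntegrable_const)
    (MeasureTheory.ae_of_all _ (fun x hx t ht => hd t x))
  exact key.2


/-- Non-existence of quasi-periodic solutions of `y_tt - y_xx = y_x^p + f(y)` (p odd):
any smooth, spatially 2π-periodic, time-quasi-periodic solution satisfies `y_x ≡ 0`,
and is constant if `f ≡ 0`. -/
theorem no_quasiperiodic_yxp
    (p : ℕ) (hp : Odd p) (hp0 : 0 < p)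
    (f : ℝ → ℝ) (hf : Continuous f)
    (y : ℝ × ℝ → ℝ) (hy : ContDiff ℝ (⊤ : ℕ∞) y)
    (hper : ∀ t x : ℝ, y (t, x + 2 * Real.pi) = y (t, x))
    (hqp : QuasiPeriodicInTime y)
    (heq : ∀ t x : ℝ,
      ptime2 y t x - pspace2 y t x = (pspace y t x) ^ p + f (y (t, x))) :
    (∀ t x : ℝ, pspace y t x = 0) ∧
      ((∀ z : ℝ, f z = 0) → ∀ t x t' x' : ℝ, y (t, x) = y (t', x')) := by
  obtain ⟨m, ω, F, hF, hFθ, hFx, hyF⟩ := hqp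
  have hyd : Differentiable ℝ y := hy.differentiable (by simp)
  have hfd : ContDiff ℝ (⊤ : ℕ∞) (fderiv ℝ y) := hy.fderiv_right (by simp)
  have hFd : Differentiable ℝ F := hF.differentiable (by simp)
  have hFfd : ContDiff ℝ (⊤ : ℕ∞) (fderiv ℝ F) := hF.fderiv_right (by simp)
  set Yt : ℝ × ℝ → ℝ := fun q => fderiv ℝ y q (1, 0) with hYtdef
  set Ys : ℝ × ℝ → ℝ := fun q => fderiv ℝ y q (0, 1) with hYsdef
  have hYtc : ContDiff ℝ (⊤ : ℕ∞) Yt := hfd.clm_apply contDiff_const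
  have hYsc : ContDiff ℝ (⊤ : ℕ∞) Ys := hfd.clm_apply contDiff_const
  have hYtd : Differentiable ℝ Yt := hYtc.differentiable (by simp)
  have hYsd : Differentiable ℝ Ys := hYsc.differentiable (by simp)
  -- derivatives along coordinate curves
  have Hcw1 : ∀ (g : ℝ × ℝ → ℝ), Differentiable ℝ g → ∀ t x : ℝ,
      HasDerivAt (fun s => g (s, x)) (fderiv ℝ g (t, x) (1, 0)) t := fun g hg t x =>
    hasDerivAt_comp_curve g hg _ _ t ((hasDerivAt_id t).prodMk (hasDerivAt_const t x))
  have Hcw2 : ∀ (g : ℝ × ℝ → ℝ), Differentiable ℝ g → ∀ t x : ℝ,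
      HasDerivAt (fun s => g (t, s)) (fderiv ℝ g (t, x) (0, 1)) x := fun g hg t x =>
    hasDerivAt_comp_curve g hg _ _ x ((hasDerivAt_const x t).prodMk (hasDerivAt_id x))
  have hpt1 : ∀ t x : ℝ, ptime y t x = Yt (t, x) := fun t x => (Hcw1 y hyd t x).deriv
  have hps1 : ∀ t x : ℝ, pspace y t x = Ys (t, x) := fun t x => (Hcw2 y hyd t x).deriv
  have hpt2 : ∀ t x : ℝ, ptime2 y t x = fderiv ℝ Yt (t, x) (1, 0) := by
    intro t x
    have he : (fun s => ptime y s x) = fun s => Yt (s, x) := funext fun s => hpt1 s x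
    rw [ptime2, he]
    exact (Hcw1 Yt hYtd t x).deriv
  have hps2 : ∀ t x : ℝ, pspace2 y t x = fderiv ℝ Ys (t, x) (0, 1) := by
    intro t x
    have he : (fun s => pspace y t s) = fun s => Ys (t, s) := funext fun s => hps1 t s
    rw [pspace2, he]
    exact (Hcw2 Ys hYsd t x).deriv
  -- symmetry of second derivatives
  have hclm : ∀ (g : ℝ × ℝ → ℝ), ContDiff ℝ (⊤ : ℕ∞) (fderiv ℝ g) → ∀ (q v w : ℝ × ℝ),
      fderiv ℝ (fun q' => fderiv ℝ g q' w) q v = fderiv ℝ (fderiv ℝ g) q v w := by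
    intro g hg q v w
    rw [fderiv_clm_apply ((hg.differentiable (by simp)) q) (differentiableAt_const w)]
    simp
  have hsymm : ∀ q : ℝ × ℝ, fderiv ℝ Ys q (1, 0) = fderiv ℝ Yt q (0, 1) := by
    intro q
    have hsq : IsSymmSndFDerivAt ℝ y q := hy.contDiffAt.isSymmSndFDerivAt (by rw [minSmoothness_of_isRCLikeNormedField]; exact WithTop.coe_le_coe.2 le_top)
    calc fderiv ℝ Ys q (1, 0) = fderiv ℝ (fderiv ℝ y) q (1, 0) (0, 1) := hclm y hfd q _ _
    _ = fderiv ℝ (fderiv ℝ y) q (0, 1) (1, 0) := hsq _ _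
    _ = fderiv ℝ Yt q (0, 1) := (hclm y hfd q _ _).symm
  -- periodicity in x
  have hyshift : ∀ q : ℝ × ℝ, y (q + ((0 : ℝ), 2 * Real.pi)) = y q := by
    intro q
    have hq : q + ((0 : ℝ), 2 * Real.pi) = (q.1, q.2 + 2 * Real.pi) := by
      apply Prod.ext <;> simp
    rw [hq]
    exact hper q.1 q.2
  have hfper : ∀ q : ℝ × ℝ, fderiv ℝ y (q + ((0 : ℝ), 2 * Real.pi)) = fderiv ℝ y q :=
    fderiv_of_periodic y hyd _ hyshift
  have hpair : ∀ t x : ℝ, ((t, x + 2 * Real.pi) : ℝ × ℝ) = (t, x) + ((0 : ℝ), 2 * Real.pi) := by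
    intro t x; simp [Prod.ext_iff]
  have hYtper : ∀ t x : ℝ, Yt (t, x + 2 * Real.pi) = Yt (t, x) := by
    intro t x; rw [hYtdef]; simp only; rw [hpair, hfper]
  have hYsper : ∀ t x : ℝ, Ys (t, x + 2 * Real.pi) = Ys (t, x) := by
    intro t x; rw [hYsdef]; simp only; rw [hpair, hfper]
  -- quasi-periodic representation of the first derivatives
  set A : (Fin m → ℝ) × ℝ → ℝ := fun q => fderiv ℝ F q (ω, 0) with hAdef
  set B : (Fin m → ℝ) × ℝ → ℝ := fun q => fderiv ℝ F q (0, 1) with hBdef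
  have hAc : Continuous A := (hFfd.clm_apply contDiff_const).continuous
  have hBc : Continuous B := (hFfd.clm_apply contDiff_const).continuous
  have hcurve : ∀ x t : ℝ, HasDerivAt (fun s : ℝ => (((fun i => ω i * s) : Fin m → ℝ), x))
      ((ω, 0) : (Fin m → ℝ) × ℝ) t := by
    intro x t
    refine HasDerivAt.prodMk ?_ (hasDerivAt_const t x)
    exact hasDerivAt_pi.2 fun i => by simpa using (hasDerivAt_id t).const_mul (ω i)
  have hYtA : ∀ t x : ℝ, Yt (t, x) = A (((fun i => ω i * t) : Fin m → ℝ), x) := by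
    intro t x
    have h1 : HasDerivAt (fun s => y (s, x)) (Yt (t, x)) t := Hcw1 y hyd t x
    have h2 : HasDerivAt (fun s => F (((fun i => ω i * s) : Fin m → ℝ), x))
        (A (((fun i => ω i * t) : Fin m → ℝ), x)) t :=
      hasDerivAt_comp_curve F hFd _ _ t (hcurve x t)
    have h3 : (fun s => y (s, x)) = fun s => F (((fun i => ω i * s) : Fin m → ℝ), x) :=
      funext fun s => hyF s x
    rw [h3] at h1
    exact h1.unique h2
  have hYsB : ∀ t x : ℝ, Ys (t, x) = B (((fun i => ω i * t) : Fin m → ℝ), x) := by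
    intro t x
    have h1 : HasDerivAt (fun s => y (t, s)) (Ys (t, x)) x := Hcw2 y hyd t x
    have h2 : HasDerivAt (fun s => F (((fun i => ω i * t) : Fin m → ℝ), s))
        (B (((fun i => ω i * t) : Fin m → ℝ), x)) x :=
      hasDerivAt_comp_curve F hFd _ _ x
        ((hasDerivAt_const x ((fun i => ω i * t) : Fin m → ℝ)).prodMk (hasDerivAt_id x))
    have h3 : (fun s => y (t, s)) = fun s => F (((fun i => ω i * t) : Fin m → ℝ), s) :=
      funext fun s => hyF t s
    rw [h3] at h1
    exact h1.unique h2
  -- lattice periodicity of A and B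
  have hFshift : ∀ (i : Fin m) (q : (Fin m → ℝ) × ℝ),
      F (q + (((2 * Real.pi) • (Pi.single i 1 : Fin m → ℝ)), (0 : ℝ))) = F q := by
    intro i q
    have hq : q + (((2 * Real.pi) • (Pi.single i 1 : Fin m → ℝ)), (0 : ℝ))
        = (q.1 + (2 * Real.pi) • (Pi.single i 1 : Fin m → ℝ), q.2) := by
      apply Prod.ext <;> simp
    rw [hq]
    exact hFθ q.1 q.2 i
  have hFfper : ∀ (i : Fin m) (q : (Fin m → ℝ) × ℝ),
      fderiv ℝ F (q + (((2 * Real.pi) • (Pi.single i 1 : Fin m → ℝ)), (0 : ℝ))) = fderiv ℝ F q :=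
    fun i => fderiv_of_periodic F hFd _ (hFshift i)
  have hpairθ : ∀ (θ : Fin m → ℝ) (x : ℝ) (i : Fin m),
      ((θ + (2 * Real.pi) • (Pi.single i 1 : Fin m → ℝ), x) : (Fin m → ℝ) × ℝ)
        = (θ, x) + (((2 * Real.pi) • (Pi.single i 1 : Fin m → ℝ)), (0 : ℝ)) := by
    intro θ x i; simp [Prod.ext_iff]
  have hAper : ∀ (θ : Fin m → ℝ) (x : ℝ) (i : Fin m),
      A (θ + (2 * Real.pi) • (Pi.single i 1 : Fin m → ℝ), x) = A (θ, x) := by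
    intro θ x i; rw [hAdef]; simp only; rw [hpairθ, hFfper]
  have hBper : ∀ (θ : Fin m → ℝ) (x : ℝ) (i : Fin m),
      B (θ + (2 * Real.pi) • (Pi.single i 1 : Fin m → ℝ), x) = B (θ, x) := by
    intro θ x i; rw [hBdef]; simp only; rw [hpairθ, hFfper]
  -- the momentum functional
  set I : ℝ → ℝ := fun t => ∫ x in (0:ℝ)..2 * Real.pi, Yt (t, x) * Ys (t, x) with hIdef
  set J : (Fin m → ℝ) → ℝ := fun θ => ∫ x in (0:ℝ)..2 * Real.pi, A (θ, x) * B (θ, x) with hJdef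
  have hIJ : ∀ t : ℝ, I t = J (fun i => ω i * t) := by
    intro t
    rw [hIdef, hJdef]
    simp only
    exact intervalIntegral.integral_congr fun x _ => by rw [hYtA, hYsB]
  have hJcont : Continuous J := by
    rw [hJdef]
    exact intervalIntegral.continuous_parametric_intervalIntegral_of_continuous'
      (f := fun θ x => A (θ, x) * B (θ, x))
      (by exact (hAc.comp continuous_id).mul hBc) 0 (2 * Real.pi)
  have hJper : ∀ (θ : Fin m → ℝ) (i : Fin m),
      J (θ + (2 * Real.pi) • (Pi.single i 1 : Fin m → ℝ)) = J θ := by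
    intro θ i
    rw [hJdef]
    simp only
    exact intervalIntegral.integral_congr fun x _ => by rw [hAper, hBper]
    -- second derivatives
  set Ytt : ℝ × ℝ → ℝ := fun q => fderiv ℝ Yt q (1, 0) with hYttdef
  set Yst : ℝ × ℝ → ℝ := fun q => fderiv ℝ Ys q (1, 0) with hYstdef
  set Yts : ℝ × ℝ → ℝ := fun q => fderiv ℝ Yt q (0, 1) with hYtsdef
  set Yss : ℝ × ℝ → ℝ := fun q => fderiv ℝ Ys q (0, 1) with hYssdef
  have hYttc : Continuous Ytt := by
    have hcd : ContDiff ℝ (⊤ : ℕ∞) (fderiv ℝ Yt) := hYtc.fderiv_right (by simp)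
    exact (hcd.clm_apply contDiff_const).continuous
  have hYstc : Continuous Yst := by
    have hcd : ContDiff ℝ (⊤ : ℕ∞) (fderiv ℝ Ys) := hYsc.fderiv_right (by simp)
    exact (hcd.clm_apply contDiff_const).continuous
  have hYtsc : Continuous Yts := by
    have hcd : ContDiff ℝ (⊤ : ℕ∞) (fderiv ℝ Yt) := hYtc.fderiv_right (by simp)
    exact (hcd.clm_apply contDiff_const).continuous
  have hYssc : Continuous Yss := by
    have hcd : ContDiff ℝ (⊤ : ℕ∞) (fderiv ℝ Ys) := hYsc.fderiv_right (by simp)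
    exact (hcd.clm_apply contDiff_const).continuous
  have hI' : ∀ t₀ : ℝ, HasDerivAt I
      (∫ x in (0:ℝ)..2 * Real.pi, (Ytt (t₀, x) * Ys (t₀, x) + Yt (t₀, x) * Yst (t₀, x))) t₀ := by
    intro t₀
    exact hasDerivAt_intervalIntegral_param (fun q => Yt q * Ys q)
      (fun q => Ytt q * Ys q + Yt q * Yst q)
      (hYtc.continuous.mul hYsc.continuous)
      ((hYttc.mul hYsc.continuous).add (hYtc.continuous.mul hYstc))
      (fun t x => (Hcw1 Yt hYtd t x).mul (Hcw1 Ys hYsd t x)) t₀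
  have hWkey : ∀ t₀ : ℝ,
      (∫ x in (0:ℝ)..2 * Real.pi, (Ytt (t₀, x) * Ys (t₀, x) + Yt (t₀, x) * Yst (t₀, x)))
        = ∫ x in (0:ℝ)..2 * Real.pi, Ys (t₀, x) ^ (p + 1) := by
    intro t₀
    set Φ : ℝ → ℝ := fun z => ∫ u in (0:ℝ)..z, f u with hΦdef
    have hΦ : ∀ z, HasDerivAt Φ (f z) z := fun z => (hf.integral_hasStrictDerivAt 0 z).hasDerivAt
    set W : ℝ → ℝ := fun x => Ys (t₀, x) ^ 2 / 2 + Yt (t₀, x) ^ 2 / 2 + Φ (y (t₀, x)) with hWdef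
    set W' : ℝ → ℝ := fun x =>
      Ys (t₀, x) * Yss (t₀, x) + Yt (t₀, x) * Yts (t₀, x) + f (y (t₀, x)) * Ys (t₀, x) with hW'def
    have hW : ∀ x, HasDerivAt W (W' x) x := by
      intro x
      have h1 : HasDerivAt (fun s => Ys (t₀, s)) (Yss (t₀, x)) x := Hcw2 Ys hYsd t₀ x
      have h2 : HasDerivAt (fun s => Yt (t₀, s)) (Yts (t₀, x)) x := Hcw2 Yt hYtd t₀ x
      have h3 : HasDerivAt (fun s => y (t₀, s)) (Ys (t₀, x)) x := Hcw2 y hyd t₀ x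
      have h4 : HasDerivAt (fun s => Φ (y (t₀, s))) (f (y (t₀, x)) * Ys (t₀, x)) x :=
        by have := (hΦ (y (t₀, x))).comp x h3; exact this
      have h5 := (((h1.mul h1).div_const 2).add ((h2.mul h2).div_const 2)).add h4
      have h6 : HasDerivAt (fun s => Ys (t₀, s) * Ys (t₀, s) / 2 + Yt (t₀, s) * Yt (t₀, s) / 2
          + Φ (y (t₀, s))) (W' x) x := by
        convert h5 using 1
        · rfl
        · rfl
        · rfl
        rw [hW'def]; ring
      have h7 : W = fun s => Ys (t₀, s) * Ys (t₀, s) / 2 + Yt (t₀, s) * Yt (t₀, s) / 2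
          + Φ (y (t₀, s)) := by
        funext s; rw [hWdef]; ring
      rw [h7]
      exact h6
    have c1 : Continuous (fun x => Ys (t₀, x)) :=
      hYsc.continuous.comp (continuous_const.prodMk continuous_id)
    have c2 : Continuous (fun x => Yss (t₀, x)) :=
      hYssc.comp (continuous_const.prodMk continuous_id)
    have c3 : Continuous (fun x => Yt (t₀, x)) :=
      hYtc.continuous.comp (continuous_const.prodMk continuous_id)
    have c4 : Continuous (fun x => Yts (t₀, x)) :=
      hYtsc.comp (continuous_const.prodMk continuous_id)
    have c5 : Continuous (fun x => y (t₀, x)) :=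
      hy.continuous.comp (continuous_const.prodMk continuous_id)
    have hW'c : Continuous W' := by
      rw [hW'def]
      exact ((c1.mul c2).add (c3.mul c4)).add ((hf.comp c5).mul c1)
    have hFTC : (∫ x in (0:ℝ)..2 * Real.pi, W' x) = W (2 * Real.pi) - W 0 :=
      intervalIntegral.integral_eq_sub_of_hasDerivAt (fun x _ => hW x)
        (hW'c.intervalIntegrable _ _)
    have hW0 : W (2 * Real.pi) = W 0 := by
      have e1 : Ys (t₀, 2 * Real.pi) = Ys (t₀, 0) := by
        have := hYsper t₀ 0; rw [zero_add] at this; exact this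
      have e2 : Yt (t₀, 2 * Real.pi) = Yt (t₀, 0) := by
        have := hYtper t₀ 0; rw [zero_add] at this; exact this
      have e3 : y (t₀, 2 * Real.pi) = y (t₀, 0) := by
        have := hper t₀ 0; rw [zero_add] at this; exact this
      rw [hWdef]; simp only
      rw [e1, e2, e3]
    have hint : ∀ x : ℝ, Ytt (t₀, x) * Ys (t₀, x) + Yt (t₀, x) * Yst (t₀, x)
        = W' x + Ys (t₀, x) ^ (p + 1) := by
      intro x
      have h6 : Ytt (t₀, x) = Yss (t₀, x) + Ys (t₀, x) ^ p + f (y (t₀, x)) := by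
        have hh := heq t₀ x
        rw [hpt2, hps2, hps1] at hh
        rw [hYttdef, hYssdef]
        simp only
        linarith [hh]
      have h7 : Yst (t₀, x) = Yts (t₀, x) := hsymm (t₀, x)
      rw [h6, h7, hW'def]
      simp only
      rw [pow_succ]
      ring
    have hcp : Continuous (fun x => Ys (t₀, x) ^ (p + 1)) := c1.pow _
    calc (∫ x in (0:ℝ)..2 * Real.pi, (Ytt (t₀, x) * Ys (t₀, x) + Yt (t₀, x) * Yst (t₀, x)))
        = ∫ x in (0:ℝ)..2 * Real.pi, (W' x + Ys (t₀, x) ^ (p + 1)) :=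
          intervalIntegral.integral_congr fun x _ => hint x
    _ = (∫ x in (0:ℝ)..2 * Real.pi, W' x) + ∫ x in (0:ℝ)..2 * Real.pi, Ys (t₀, x) ^ (p + 1) :=
          intervalIntegral.integral_add (hW'c.intervalIntegrable _ _)
            (hcp.intervalIntegrable _ _)
    _ = ∫ x in (0:ℝ)..2 * Real.pi, Ys (t₀, x) ^ (p + 1) := by
          rw [hFTC, hW0]; ring
  have hderiv : ∀ t₀ : ℝ, HasDerivAt I (∫ x in (0:ℝ)..2 * Real.pi, Ys (t₀, x) ^ (p + 1)) t₀ :=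
    fun t₀ => (hWkey t₀) ▸ hI' t₀
  have hmono : Monotone I := by
    apply monotone_of_deriv_nonneg (fun t => (hderiv t).differentiableAt)
    intro t
    rw [(hderiv t).deriv]
    apply intervalIntegral.integral_nonneg (by positivity)
    intro u _
    exact (hp.add_one).pow_nonneg _
  have hconst := const_of_monotone_qp ω J hJcont (fun θ i => hJper θ i) I hmono hIJ
  have hIzero : ∀ t : ℝ, (∫ x in (0:ℝ)..2 * Real.pi, Ys (t, x) ^ (p + 1)) = 0 := by
    intro t
    have hc : I = fun _ => I 0 := funext fun s => hconst s 0
    have h0 : HasDerivAt I 0 t := by rw [hc]; exact hasDerivAt_const t (I 0)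
    exact (hderiv t).unique h0
  have hYs0 : ∀ t x : ℝ, Ys (t, x) = 0 := by
    intro t x
    have c1 : Continuous (fun x => Ys (t, x)) :=
      hYsc.continuous.comp (continuous_const.prodMk continuous_id)
    have hz := zero_of_integral (fun x => Ys (t, x) ^ (p + 1)) (c1.pow _)
      (fun x => (hp.add_one).pow_nonneg _)
      (fun x => by simp only; rw [hYsper]) (hIzero t) x
    exact pow_eq_zero_iff (Nat.succ_ne_zero p) |>.1 hz
  have part1 : ∀ t x : ℝ, pspace y t x = 0 := fun t x => (hps1 t x).trans (hYs0 t x)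
  refine ⟨part1, ?_⟩
  intro hf0 t x t' x'
  have hyx : ∀ t x : ℝ, y (t, x) = y (t, 0) := by
    intro t x
    have hdiff : Differentiable ℝ (fun s => y (t, s)) := fun s => (Hcw2 y hyd t s).differentiableAt
    have hz : ∀ s, deriv (fun s => y (t, s)) s = 0 := fun s => by
      rw [(Hcw2 y hyd t s).deriv]; exact hYs0 t s
    exact is_const_of_deriv_eq_zero hdiff hz x 0
  have hpspace2z : ∀ t x : ℝ, pspace2 y t x = 0 := by
    intro t x
    have he : (fun s => pspace y t s) = fun _ => (0 : ℝ) := funext fun s => part1 t s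
    rw [pspace2, he, deriv_const]
  have hYtt0 : ∀ t x : ℝ, fderiv ℝ Yt (t, x) (1, 0) = 0 := by
    intro t x
    have hh := heq t x
    rw [hpspace2z, hf0, part1, hpt2] at hh
    simpa [zero_pow hp0.ne'] using hh
  have hbconst : ∀ t x : ℝ, Yt (t, x) = Yt (0, 0) := by
    intro t x
    have h1 : Yt (t, x) = Yt (t, 0) := by
      have he : (fun s => y (s, x)) = fun s => y (s, 0) := funext fun s => hyx s x
      have h := Hcw1 y hyd t x
      rw [he] at h
      exact h.unique (Hcw1 y hyd t 0)
    have h2 : Yt (t, 0) = Yt (0, 0) := by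
      have hdiff : Differentiable ℝ (fun s => Yt (s, 0)) :=
        fun s => (Hcw1 Yt hYtd s 0).differentiableAt
      have hz : ∀ s, deriv (fun s => Yt (s, 0)) s = 0 := fun s => by
        rw [(Hcw1 Yt hYtd s 0).deriv]; exact hYtt0 s 0
      exact is_const_of_deriv_eq_zero hdiff hz t 0
    rw [h1, h2]
  have hlin : ∀ t : ℝ, y (t, 0) = y (0, 0) + Yt (0, 0) * t := by
    intro t
    have hdiff : ∀ s : ℝ, HasDerivAt (fun u => y (u, 0) - Yt (0, 0) * u) 0 s := by
      intro s
      have h1 : HasDerivAt (fun u => y (u, 0)) (Yt (s, 0)) s := Hcw1 y hyd s 0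
      have h2 : HasDerivAt (fun u : ℝ => Yt (0, 0) * u) (Yt (0, 0)) s := by
        simpa using (hasDerivAt_id s).const_mul (Yt (0, 0))
      have h3 := h1.sub h2
      rw [hbconst s 0, sub_self] at h3
      exact h3
    have hconst' := is_const_of_deriv_eq_zero (𝕜 := ℝ)
      (fun s => (hdiff s).differentiableAt) (fun s => (hdiff s).deriv) t 0
    have : y (t, 0) - Yt (0, 0) * t = y (0, 0) - Yt (0, 0) * 0 := hconst'
    linarith [this]
  have hgqc : Continuous (fun θ : Fin m → ℝ => F (θ, 0)) :=
    hF.continuous.comp (continuous_id.prodMk continuous_const)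
  have hgqper : ∀ (θ : Fin m → ℝ) (i : Fin m),
      (fun θ : Fin m → ℝ => F (θ, 0)) (θ + (2 * Real.pi) • (Pi.single i 1 : Fin m → ℝ))
        = (fun θ : Fin m → ℝ => F (θ, 0)) θ := fun θ i => hFθ θ 0 i
  have hrepg : ∀ t : ℝ, y (t, 0) = (fun θ : Fin m → ℝ => F (θ, 0)) (fun i => ω i * t) :=
    fun t => hyF t 0
  have hb0 : Yt (0, 0) = 0 := by
    rcases le_total 0 (Yt (0, 0)) with hb | hb
    · have hmono' : Monotone (fun t => y (t, 0)) := by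
        intro s u hsu
        simp only
        rw [hlin s, hlin u]
        nlinarith
      have h01 := const_of_monotone_qp ω _ hgqc hgqper _ hmono' hrepg 0 1
      rw [hlin 0, hlin 1] at h01
      linarith [h01]
    · have hmono' : Monotone (fun t => -y (t, 0)) := by
        intro s u hsu
        simp only
        rw [hlin s, hlin u]
        nlinarith
      have hrepg' : ∀ t : ℝ, -y (t, 0)
          = (fun θ : Fin m → ℝ => -F (θ, 0)) (fun i => ω i * t) := by
        intro t
        show -y (t, 0) = -F (fun i => ω i * t, 0)
        rw [hyF t 0]
      have h01 := const_of_monotone_qp ω _ hgqc.neg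
        (fun θ i => neg_inj.mpr (hFθ θ 0 i)) _ hmono' hrepg' 0 1
      rw [hlin 0, hlin 1] at h01
      linarith [h01]
  rw [hyx t x, hyx t' x', hlin t, hlin t', hb0]
  ring
end

section
/- Let p be an odd positive integer and f : ℝ → ℝ a continuous function. If y : ℝ × ℝ → ℝ is a smooth solution of the derivative wave equation y_tt − y_xx = ∂_x(y^p) + f(y), that is y_tt − y_xx = p·y^(p−1)·y_x + f(y), on ℝ × 𝕋 (i.e. 2π-periodic in x) which is quasi-periodic in time, then y does not depend on the space variable, i.e. y_x ≡ 0, so y(t, x) = c(t). Moreover, if f ≡ 0 then y is constant. -/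
open MeasureTheory intervalIntegral Real Set

/-- fderiv is invariant under a translation that preserves the function. -/
lemma fderiv_translation {E : Type*} [NormedAddCommGroup E] [NormedSpace ℝ E]
    (g : E → ℝ) (hg : Differentiable ℝ g) (v : E) (h : ∀ w, g (w + v) = g w) (w : E) :
    fderiv ℝ g (w + v) = fderiv ℝ g w := by
  have h1 : HasFDerivAt (fun z => g (z + v)) (fderiv ℝ g (w + v)) w := by
    have := (hg (w + v)).hasFDerivAt.comp w ((hasFDerivAt_id w).add_const v)
    exact this
  have h2 : (fun z : E => g (z + v)) = g := funext h
  rw [h2] at h1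
  exact ((hg w).hasFDerivAt.unique h1).symm

/-- Periodicity in each coordinate direction implies `ℤ^m`-periodicity. -/
lemma per_zm {m : ℕ} (G : (Fin m → ℝ) → ℝ)
    (h : ∀ (θ : Fin m → ℝ) (i : Fin m), G (θ + (2 * Real.pi) • (Pi.single i 1 : Fin m → ℝ)) = G θ)
    (θ : Fin m → ℝ) (k : Fin m → ℤ) :
    G (θ + fun i => 2 * Real.pi * k i) = G θ := by
  have single : ∀ (i : Fin m) (n : ℤ) (θ : Fin m → ℝ),
      G (θ + n • ((2 * Real.pi) • (Pi.single i 1 : Fin m → ℝ))) = G θ := by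
    intro i n θ
    have hp : Function.Periodic G ((2 * Real.pi) • (Pi.single i 1 : Fin m → ℝ)) := fun θ' => h θ' i
    exact hp.zsmul n θ
  have key : ∀ (s : Finset (Fin m)) (θ : Fin m → ℝ),
      G (θ + ∑ i ∈ s, (k i) • ((2 * Real.pi) • (Pi.single i 1 : Fin m → ℝ))) = G θ := by
    intro s
    induction s using Finset.cons_induction with
    | empty => intro θ; simp
    | cons a s ha ih =>
      intro θ
      rw [Finset.sum_cons, ← add_assoc θ]
      rw [show θ + (k a) • ((2 * Real.pi) • (Pi.single a 1 : Fin m → ℝ))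
            + ∑ i ∈ s, (k i) • ((2 * Real.pi) • (Pi.single i 1 : Fin m → ℝ))
          = (θ + (k a) • ((2 * Real.pi) • (Pi.single a 1 : Fin m → ℝ)))
            + ∑ i ∈ s, (k i) • ((2 * Real.pi) • (Pi.single i 1 : Fin m → ℝ)) from rfl]
      rw [ih (θ + (k a) • ((2 * Real.pi) • (Pi.single a 1 : Fin m → ℝ))), single a (k a) θ]
  have hsum : (fun i => 2 * Real.pi * k i)
      = ∑ i : Fin m, (k i) • ((2 * Real.pi) • (Pi.single i 1 : Fin m → ℝ)) := by
    funext j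
    simp only [Finset.sum_apply, Pi.smul_apply, Pi.single_apply, smul_eq_mul,
      zsmul_eq_mul]
    rw [Finset.sum_eq_single j]
    · simp [mul_comm]
    · intro i _ hij; simp [Ne.symm hij]
    · intro hj; exact absurd (Finset.mem_univ j) hj
  rw [hsum]
  exact key Finset.univ θ

/-- Recurrence: the linear flow on the torus returns near the origin at arbitrarily
late times. -/
lemma recurrence {m : ℕ} (ω : Fin m → ℝ) (T ε : ℝ) (hT : 0 < T) (hε : 0 < ε) :
    ∃ t, T ≤ t ∧ ∃ k : Fin m → ℤ, ∀ i, |ω i * t - 2 * Real.pi * k i| < ε := by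
  set c : ℝ := 2 * Real.pi with hc_def
  have hc : 0 < c := by positivity
  have hc0 : c ≠ 0 := ne_of_gt hc
  set a : ℕ → Fin m → ℝ := fun n i => Int.fract (ω i * (n * T) / c) with ha_def
  have hmem : ∀ n, a n ∈ Set.Icc (0 : Fin m → ℝ) 1 := by
    intro n
    constructor
    · intro i; exact Int.fract_nonneg _
    · intro i; exact (Int.fract_lt_one _).le
  obtain ⟨L, -, φ, hφ, hconv⟩ := isCompact_Icc.tendsto_subseq hmem
  set δ : ℝ := ε / c with hδ_def
  have hδ : 0 < δ := div_pos hε hc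
  rw [Metric.tendsto_atTop] at hconv
  obtain ⟨N, hN⟩ := hconv (δ / 2) (by positivity)
  have h1 := hN N le_rfl
  have h2 := hN (N + 1) (Nat.le_succ N)
  set n1 := φ N with hn1
  set n2 := φ (N + 1) with hn2
  have hlt : n1 < n2 := hφ (Nat.lt_succ_self N)
  have hdistn : dist (a n2) (a n1) < δ := by
    calc dist (a n2) (a n1) ≤ dist (a n2) L + dist (a n1) L := dist_triangle_right _ _ _
    _ < δ / 2 + δ / 2 := by exact add_lt_add h2 h1
    _ = δ := by ring
  refine ⟨((n2 : ℝ) - n1) * T, ?_, fun i => ⌊ω i * (n2 * T) / c⌋ - ⌊ω i * (n1 * T) / c⌋, ?_⟩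
  · have h1n : (1 : ℝ) ≤ (n2 : ℝ) - n1 := by
      have : (n1 : ℝ) + 1 ≤ n2 := by exact_mod_cast Nat.succ_le_of_lt hlt
      linarith
    nlinarith
  · intro i
    have frac_eq : ∀ n : ℕ, c * a n i = ω i * (n * T) - c * ⌊ω i * (n * T) / c⌋ := by
      intro n
      rw [ha_def]
      simp only [Int.fract]
      rw [mul_sub, mul_div_cancel₀ _ hc0]
    have key : ω i * (((n2 : ℝ) - n1) * T)
        - 2 * Real.pi * ((⌊ω i * (n2 * T) / c⌋ - ⌊ω i * (n1 * T) / c⌋ : ℤ) : ℝ)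
        = c * a n2 i - c * a n1 i := by
      rw [frac_eq n1, frac_eq n2]
      push_cast
      rw [hc_def]
      ring
    rw [key]
    have hdi : |a n2 i - a n1 i| < δ := by
      calc |a n2 i - a n1 i| = dist (a n2 i) (a n1 i) := (Real.dist_eq _ _).symm
      _ ≤ dist (a n2) (a n1) := dist_le_pi_dist _ _ i
      _ < δ := hdistn
    calc |c * a n2 i - c * a n1 i| = c * |a n2 i - a n1 i| := by
          rw [← mul_sub, abs_mul, abs_of_pos hc]
    _ < c * δ := by exact (mul_lt_mul_iff_right₀ hc).2 hdi
    _ = ε := by rw [hδ_def]; field_simp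


/-- Derivative in the first coordinate. -/
lemma hasDerivAt_comp_fst {E F' : Type*} [NormedAddCommGroup E] [NormedSpace ℝ E]
    [NormedAddCommGroup F'] [NormedSpace ℝ F']
    (g : ℝ × E → F') (hg : Differentiable ℝ g) (t : ℝ) (x : E) :
    HasDerivAt (fun s => g (s, x)) (fderiv ℝ g (t, x) (1, 0)) t := by
  have h := (hg (t, x)).hasFDerivAt.comp_hasDerivAt t
    ((hasDerivAt_id t).prodMk (hasDerivAt_const t x))
  simpa [Function.comp_def] using h

/-- Derivative in the second coordinate. -/
lemma hasDerivAt_comp_snd {E F' : Type*} [NormedAddCommGroup E] [NormedSpace ℝ E]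
    [NormedAddCommGroup F'] [NormedSpace ℝ F']
    (g : E × ℝ → F') (hg : Differentiable ℝ g) (a : E) (x : ℝ) :
    HasDerivAt (fun s => g (a, s)) (fderiv ℝ g (a, x) (0, 1)) x := by
  have h := (hg (a, x)).hasFDerivAt.comp_hasDerivAt x
    ((hasDerivAt_const x a).prodMk (hasDerivAt_id x))
  simpa [Function.comp_def] using h

/-- A continuous nonnegative function with vanishing integral on an interval containing
`x0` in its interior vanishes at `x0`. -/
lemma zero_of_integral_zero (g : ℝ → ℝ) (hc : Continuous g) (hnn : ∀ x, 0 ≤ g x)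
    {a b x0 : ℝ} (h1 : a < x0) (h2 : x0 < b) (hi : ∫ x in a..b, g x = 0) :
    g x0 = 0 := by
  set Φ : ℝ → ℝ := fun u => ∫ x in a..u, g x with hΦ
  have hint : ∀ u v : ℝ, IntervalIntegrable g volume u v := fun u v =>
    hc.intervalIntegrable u v
  have mono : Monotone Φ := by
    intro u v huv
    have hsub : Φ v - Φ u = ∫ x in u..v, g x :=
      integral_interval_sub_left (hint a v) (hint a u)
    have : 0 ≤ ∫ x in u..v, g x := intervalIntegral.integral_nonneg huv fun x _ => hnn x
    linarith
  have hΦa : Φ a = 0 := integral_same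
  have hΦb : Φ b = 0 := hi
  have hconst : ∀ u, a ≤ u → u ≤ b → Φ u = 0 := fun u hu hub =>
    le_antisymm (hΦb ▸ mono hub) (hΦa ▸ mono hu)
  have hev : Φ =ᶠ[nhds x0] (fun _ => (0 : ℝ)) := by
    filter_upwards [Ioo_mem_nhds h1 h2] with u hu
    exact hconst u hu.1.le hu.2.le
  have hd : deriv Φ x0 = g x0 := Continuous.deriv_integral g hc a x0
  rw [← hd, hev.deriv_eq, deriv_const]

/-- A monotone function of the form `G (ω t)` with `G` continuous and `ℤ^m`-periodic
is constant. -/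
lemma monotone_qp_const {m : ℕ} (ω : Fin m → ℝ) (G : (Fin m → ℝ) → ℝ)
    (hGc : Continuous G)
    (hGper : ∀ (θ : Fin m → ℝ) (i : Fin m),
      G (θ + (2 * Real.pi) • (Pi.single i 1 : Fin m → ℝ)) = G θ)
    (M : ℝ → ℝ) (hMG : ∀ t, M t = G fun i => ω i * t)
    (hmono : Monotone M) : ∀ t, M t = M 0 := by
  have hM0 : M 0 = G 0 := by
    rw [hMG 0, show (fun i => ω i * 0) = (0 : Fin m → ℝ) from funext fun i => mul_zero _]
  have near : ∀ T ε : ℝ, 0 < T → 0 < ε →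
      ∃ t, T ≤ t ∧ |M t - M 0| < ε ∧ |M (-t) - M 0| < ε := by
    intro T ε hT hε
    obtain ⟨δ, hδpos, hδ⟩ := Metric.continuousAt_iff.1 hGc.continuousAt ε hε
    obtain ⟨t, ht, k, hk⟩ := recurrence ω T δ hT hδpos
    refine ⟨t, ht, ?_, ?_⟩
    · have hper' := per_zm G hGper (fun i => ω i * t - 2 * Real.pi * k i) k
      rw [show ((fun i => ω i * t - 2 * Real.pi * k i) + fun i => 2 * Real.pi * k i)
          = fun i => ω i * t from funext fun i => by
            simp only [Pi.add_apply]; ring] at hper'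
      have hdist : dist (fun i => ω i * t - 2 * Real.pi * k i) (0 : Fin m → ℝ) < δ :=
        (dist_pi_lt_iff hδpos).2 fun i => by
          rw [Real.dist_eq, Pi.zero_apply, sub_zero]; exact hk i
      have hdG := hδ hdist
      rw [hMG t, hper', hM0]
      simpa [Real.dist_eq] using hdG
    · have hper' := per_zm G hGper (fun i => -(ω i * t - 2 * Real.pi * k i)) (fun i => -(k i))
      rw [show ((fun i => -(ω i * t - 2 * Real.pi * k i))
            + fun i => 2 * Real.pi * ((-(k i) : ℤ) : ℝ))
          = fun i => ω i * (-t) from funext fun i => by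
            simp only [Pi.add_apply]; push_cast; ring] at hper'
      have hdist : dist (fun i => -(ω i * t - 2 * Real.pi * k i)) (0 : Fin m → ℝ) < δ :=
        (dist_pi_lt_iff hδpos).2 fun i => by
          rw [Real.dist_eq, Pi.zero_apply, sub_zero, abs_neg]; exact hk i
      have hdG := hδ hdist
      rw [hMG (-t), hper', hM0]
      simpa [Real.dist_eq] using hdG
  intro t
  apply le_antisymm
  · refine le_of_forall_pos_le_add fun ε hε => ?_
    obtain ⟨t', ht', h1, -⟩ := near (max t 1) ε
      (lt_of_lt_of_le one_pos (le_max_right t 1)) hε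
    have hle : M t ≤ M t' := hmono ((le_max_left t 1).trans ht')
    have h1' := abs_sub_lt_iff.1 h1
    linarith [h1'.1]
  · refine le_of_forall_pos_le_add fun ε hε => ?_
    obtain ⟨t', ht', -, h2⟩ := near (max (-t) 1) ε
      (lt_of_lt_of_le one_pos (le_max_right (-t) 1)) hε
    have hle : -t' ≤ t := by
      have : -t ≤ t' := (le_max_left _ _).trans ht'
      linarith
    have hle2 : M (-t') ≤ M t := hmono hle
    have h2' := abs_sub_lt_iff.1 h2
    linarith [h2'.2]

set_option maxHeartbeats 2000000 in
/-- Non-existence of quasi-periodic solutions of `y_tt - y_xx = ∂_x(y^p) + f(y)` (p odd):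
any smooth, spatially 2π-periodic, time-quasi-periodic solution satisfies `y_x ≡ 0`,
and is constant if `f ≡ 0`. -/
theorem no_quasiperiodic_dx_yp
    (p : ℕ) (hp : Odd p) (hp0 : 0 < p)
    (f : ℝ → ℝ) (hf : Continuous f)
    (y : ℝ × ℝ → ℝ) (hy : ContDiff ℝ (⊤ : ℕ∞) y)
    (hper : ∀ t x : ℝ, y (t, x + 2 * Real.pi) = y (t, x))
    (hqp : QuasiPeriodicInTime y)
    (heq : ∀ t x : ℝ,
      ptime2 y t x - pspace2 y t x
        = (p : ℝ) * (y (t, x)) ^ (p - 1) * pspace y t x + f (y (t, x))) :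
    (∀ t x : ℝ, pspace y t x = 0) ∧
      ((∀ z : ℝ, f z = 0) → ∀ t x t' x' : ℝ, y (t, x) = y (t', x')) := by
  obtain ⟨m, ω, F, hF, hFper, hFperx, hyF⟩ := hqp
  have hπ : (0:ℝ) < Real.pi := Real.pi_pos
  have h2π : (0:ℝ) ≤ 2 * Real.pi := by positivity
  -- basic differentiability
  have hyd : Differentiable ℝ y := hy.differentiable (by simp)
  have hy1 : ContDiff ℝ (⊤ : ℕ∞) (fderiv ℝ y) := hy.fderiv_right (by simp)
  have hy1d : Differentiable ℝ (fderiv ℝ y) := hy1.differentiable (by simp)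
  have hy2 : ContDiff ℝ (⊤ : ℕ∞) (fderiv ℝ (fderiv ℝ y)) := hy1.fderiv_right (by simp)
  set A : ℝ × ℝ → (ℝ × ℝ) →L[ℝ] (ℝ × ℝ) →L[ℝ] ℝ := fderiv ℝ (fderiv ℝ y) with hA
  set Y1 : ℝ × ℝ → ℝ := fun q => fderiv ℝ y q (1, 0) with hY1
  set Y2 : ℝ × ℝ → ℝ := fun q => fderiv ℝ y q (0, 1) with hY2
  have hY1c : Continuous Y1 := (hy1.continuous).clm_apply continuous_const
  have hY2c : Continuous Y2 := (hy1.continuous).clm_apply continuous_const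
  have hAc : ∀ v w : ℝ × ℝ, Continuous fun q => A q v w := fun v w =>
    ((hy2.continuous).clm_apply continuous_const).clm_apply continuous_const
  have hptime : ∀ t x, ptime y t x = Y1 (t, x) := fun t x =>
    (hasDerivAt_comp_fst y hyd t x).deriv
  have hpspace : ∀ t x, pspace y t x = Y2 (t, x) := fun t x =>
    (hasDerivAt_comp_snd y hyd t x).deriv
  -- derivatives of Y1, Y2
  have hY1t : ∀ t x, HasDerivAt (fun s => Y1 (s, x)) (A (t, x) (1, 0) (1, 0)) t := by
    intro t x
    have h := (hasDerivAt_comp_fst (fderiv ℝ y) hy1d t x).clm_apply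
      (hasDerivAt_const t (((1:ℝ), (0:ℝ)) : ℝ × ℝ))
    simpa using h
  have hY2t : ∀ t x, HasDerivAt (fun s => Y2 (s, x)) (A (t, x) (1, 0) (0, 1)) t := by
    intro t x
    have h := (hasDerivAt_comp_fst (fderiv ℝ y) hy1d t x).clm_apply
      (hasDerivAt_const t (((0:ℝ), (1:ℝ)) : ℝ × ℝ))
    simpa using h
  have hY1x : ∀ t x, HasDerivAt (fun s => Y1 (t, s)) (A (t, x) (0, 1) (1, 0)) x := by
    intro t x
    have h := (hasDerivAt_comp_snd (fderiv ℝ y) hy1d t x).clm_apply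
      (hasDerivAt_const x (((1:ℝ), (0:ℝ)) : ℝ × ℝ))
    simpa using h
  have hY2x : ∀ t x, HasDerivAt (fun s => Y2 (t, s)) (A (t, x) (0, 1) (0, 1)) x := by
    intro t x
    have h := (hasDerivAt_comp_snd (fderiv ℝ y) hy1d t x).clm_apply
      (hasDerivAt_const x (((0:ℝ), (1:ℝ)) : ℝ × ℝ))
    simpa using h
  have hptime2 : ∀ t x, ptime2 y t x = A (t, x) (1, 0) (1, 0) := by
    intro t x
    rw [ptime2, show (fun s => ptime y s x) = fun s => Y1 (s, x) from
      funext fun s => hptime s x]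
    exact (hY1t t x).deriv
  have hpspace2 : ∀ t x, pspace2 y t x = A (t, x) (0, 1) (0, 1) := by
    intro t x
    rw [pspace2, show (fun s => pspace y t s) = fun s => Y2 (t, s) from
      funext fun s => hpspace t s]
    exact (hY2x t x).deriv
  -- Clairaut
  have hsymm : ∀ q : ℝ × ℝ, A q (1, 0) (0, 1) = A q (0, 1) (1, 0) := fun q =>
    second_derivative_symmetric (fun w => (hyd w).hasFDerivAt) ((hy1d q).hasFDerivAt) _ _
  -- periodicity in x of y and its derivatives
  have hpair : ∀ t x : ℝ, ((t, x) : ℝ × ℝ) + ((0 : ℝ), 2 * Real.pi) = (t, x + 2 * Real.pi) := by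
    intro t x; rw [Prod.mk_add_mk, add_zero]
  have hytrans : ∀ w : ℝ × ℝ, y (w + ((0 : ℝ), 2 * Real.pi)) = y w := by
    intro w
    obtain ⟨t, x⟩ := w
    rw [hpair t x]; exact hper t x
  have hfdper : ∀ w : ℝ × ℝ, fderiv ℝ y (w + ((0 : ℝ), 2 * Real.pi)) = fderiv ℝ y w :=
    fderiv_translation y hyd _ hytrans
  have hY1per : ∀ t x, Y1 (t, x + 2 * Real.pi) = Y1 (t, x) := by
    intro t x; rw [hY1]; simp only; rw [← hpair t x, hfdper (t, x)]
  have hY2per : ∀ t x, Y2 (t, x + 2 * Real.pi) = Y2 (t, x) := by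
    intro t x; rw [hY2]; simp only; rw [← hpair t x, hfdper (t, x)]
  -- the nonnegative quantity P and the t-derivative D of Y1*Y2
  set P : ℝ × ℝ → ℝ := fun q => (p : ℝ) * (y q) ^ (p - 1) * (Y2 q) ^ 2 with hP
  have hPc : Continuous P := (continuous_const.mul ((hy.continuous).pow _)).mul (hY2c.pow 2)
  have hevenp : Even (p - 1) := Nat.Odd.sub_odd hp odd_one
  have hPnn : ∀ q, 0 ≤ P q := fun q =>
    mul_nonneg (mul_nonneg (Nat.cast_nonneg p) (hevenp.pow_nonneg _)) (sq_nonneg _)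
  set D : ℝ × ℝ → ℝ := fun q => A q (1, 0) (1, 0) * Y2 q + Y1 q * A q (1, 0) (0, 1) with hD
  have hDc : Continuous D := ((hAc _ _).mul hY2c).add (hY1c.mul (hAc _ _))
  have hDt : ∀ t x, HasDerivAt (fun s => Y1 (s, x) * Y2 (s, x)) (D (t, x)) t := fun t x =>
    (hY1t t x).mul (hY2t t x)
  -- antiderivative of f
  set Fa : ℝ → ℝ := fun z => ∫ s in (0:ℝ)..z, f s with hFaDef
  have hFad : ∀ z, HasDerivAt Fa (f z) z := fun z => (hf.integral_hasStrictDerivAt 0 z).hasDerivAt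
  -- pointwise identity : D - P is an exact x-derivative
  have hgd : ∀ t x, HasDerivAt
      (fun x' => (Y2 (t, x')) ^ 2 / 2 + (Y1 (t, x')) ^ 2 / 2 + Fa (y (t, x')))
      (D (t, x) - P (t, x)) x := by
    intro t x
    have h2 := ((hY2x t x).pow 2).div_const 2
    have h1 := ((hY1x t x).pow 2).div_const 2
    have hyx : HasDerivAt (fun s => y (t, s)) (Y2 (t, x)) x := hasDerivAt_comp_snd y hyd t x
    have h3 : HasDerivAt (fun x' => Fa (y (t, x'))) (f (y (t, x)) * Y2 (t, x)) x :=
      by have h := (hFad (y (t, x))).comp x hyx; exact h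
    have htot : HasDerivAt
        (fun x' => (Y2 (t, x')) ^ 2 / 2 + (Y1 (t, x')) ^ 2 / 2 + Fa (y (t, x'))) _ x :=
      (h2.add h1).add h3
    convert htot using 1
    have heqtx := heq t x
    rw [hptime2 t x, hpspace2 t x, hpspace t x] at heqtx
    rw [hD, hP]
    simp only
    rw [hsymm (t, x)]
    linear_combination (Y2 (t, x)) * heqtx
  -- integrating D over a space period gives the integral of P
  have hHt : ∀ t, (∫ x in (0:ℝ)..(2 * Real.pi), D (t, x))
      = ∫ x in (0:ℝ)..(2 * Real.pi), P (t, x) := by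
    intro t
    have hDPc : Continuous (fun x => D (t, x) - P (t, x)) :=
      (hDc.sub hPc).comp (continuous_const.prodMk continuous_id)
    have hPtc : Continuous (fun x => P (t, x)) :=
      hPc.comp (continuous_const.prodMk continuous_id)
    have key := integral_eq_sub_of_hasDerivAt (f := fun x' =>
        (Y2 (t, x')) ^ 2 / 2 + (Y1 (t, x')) ^ 2 / 2 + Fa (y (t, x')))
      (fun x _ => hgd t x) (hDPc.intervalIntegrable 0 (2 * Real.pi))
    have e1 : Y2 (t, 2 * Real.pi) = Y2 (t, 0) := by
      have := hY2per t 0; rwa [zero_add] at this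
    have e2 : Y1 (t, 2 * Real.pi) = Y1 (t, 0) := by
      have := hY1per t 0; rwa [zero_add] at this
    have e3 : y (t, 2 * Real.pi) = y (t, 0) := by
      have := hper t 0; rwa [zero_add] at this
    have hzero : (∫ x in (0:ℝ)..(2 * Real.pi), (D (t, x) - P (t, x))) = 0 := by
      rw [key]; simp [e1, e2, e3]
    have split : (∫ x in (0:ℝ)..(2 * Real.pi), D (t, x))
        = (∫ x in (0:ℝ)..(2 * Real.pi), (D (t, x) - P (t, x)))
          + ∫ x in (0:ℝ)..(2 * Real.pi), P (t, x) := by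
      rw [← intervalIntegral.integral_add (hDPc.intervalIntegrable _ _)
        (hPtc.intervalIntegrable _ _)]
      apply intervalIntegral.integral_congr
      intro x _
      ring
    rw [split, hzero, zero_add]
  -- the momentum M
  set M : ℝ → ℝ := fun t => ∫ x in (0:ℝ)..(2 * Real.pi), Y1 (t, x) * Y2 (t, x) with hM
  have hMuv : ∀ a b : ℝ, a ≤ b →
      M b - M a = ∫ t in a..b, ∫ x in (0:ℝ)..(2 * Real.pi), D (t, x) := by
    intro a b hab
    have hux : ∀ c : ℝ, Continuous fun x => Y1 (c, x) * Y2 (c, x) := fun c =>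
      (hY1c.mul hY2c).comp (continuous_const.prodMk continuous_id)
    have inner : ∀ x : ℝ, (∫ t in a..b, D (t, x))
        = Y1 (b, x) * Y2 (b, x) - Y1 (a, x) * Y2 (a, x) := by
      intro x
      exact integral_eq_sub_of_hasDerivAt (fun s _ => hDt s x)
        ((hDc.comp (continuous_id.prodMk continuous_const)).intervalIntegrable a b)
    have hswap : (∫ t in Set.Ioc a b, (∫ x in Set.Ioc 0 (2 * Real.pi), D (t, x)))
        = ∫ x in Set.Ioc 0 (2 * Real.pi), (∫ t in Set.Ioc a b, D (t, x)) := by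
      apply MeasureTheory.integral_integral_swap
      have hio : IntegrableOn D ((Set.Icc a b) ×ˢ (Set.Icc 0 (2 * Real.pi))) volume :=
        hDc.continuousOn.integrableOn_compact (isCompact_Icc.prod isCompact_Icc)
      have hio2 : IntegrableOn D ((Set.Ioc a b) ×ˢ (Set.Ioc 0 (2 * Real.pi))) volume :=
        hio.mono_set (Set.prod_mono Set.Ioc_subset_Icc_self Set.Ioc_subset_Icc_self)
      rw [Function.uncurry_def]
      rw [MeasureTheory.Measure.prod_restrict]
      exact hio2
    calc M b - M a
        = ∫ x in (0:ℝ)..(2 * Real.pi), (Y1 (b, x) * Y2 (b, x) - Y1 (a, x) * Y2 (a, x)) := by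
          rw [hM]; simp only
          rw [intervalIntegral.integral_sub ((hux b).intervalIntegrable _ _)
            ((hux a).intervalIntegrable _ _)]
      _ = ∫ x in (0:ℝ)..(2 * Real.pi), ∫ t in a..b, D (t, x) := by
          apply intervalIntegral.integral_congr
          intro x _
          exact (inner x).symm
      _ = ∫ x in Set.Ioc 0 (2 * Real.pi), ∫ t in Set.Ioc a b, D (t, x) := by
          rw [intervalIntegral.integral_of_le h2π]
          apply MeasureTheory.setIntegral_congr_fun measurableSet_Ioc
          intro x _
          exact intervalIntegral.integral_of_le hab
      _ = ∫ t in Set.Ioc a b, ∫ x in Set.Ioc 0 (2 * Real.pi), D (t, x) := hswap.symm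
      _ = ∫ t in a..b, ∫ x in (0:ℝ)..(2 * Real.pi), D (t, x) := by
          rw [intervalIntegral.integral_of_le hab]
          apply MeasureTheory.setIntegral_congr_fun measurableSet_Ioc
          intro t _
          exact (intervalIntegral.integral_of_le h2π).symm
  have hmono : Monotone M := by
    intro a b hab
    have hd := hMuv a b hab
    have hpos : 0 ≤ ∫ t in a..b, ∫ x in (0:ℝ)..(2 * Real.pi), D (t, x) := by
      apply intervalIntegral.integral_nonneg hab
      intro t _
      rw [hHt t]
      exact intervalIntegral.integral_nonneg h2π fun x _ => hPnn (t, x)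
    linarith
  -- quasi-periodic structure of M
  have hFc : Continuous F := hF.continuous
  have hFd : Differentiable ℝ F := hF.differentiable (by simp)
  have hF1 : ContDiff ℝ (⊤ : ℕ∞) (fderiv ℝ F) := hF.fderiv_right (by simp)
  set G : (Fin m → ℝ) → ℝ := fun θ => ∫ x in (0:ℝ)..(2 * Real.pi),
    (fderiv ℝ F (θ, x) (ω, 0)) * (fderiv ℝ F (θ, x) ((0 : Fin m → ℝ), 1)) with hG
  have hY1F : ∀ t x, Y1 (t, x) = fderiv ℝ F ((fun i => ω i * t), x) (ω, 0) := by
    intro t x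
    have hcurve : HasDerivAt (fun s : ℝ => (((fun i => ω i * s) : Fin m → ℝ), x))
        ((ω, 0) : (Fin m → ℝ) × ℝ) t := by
      apply HasDerivAt.prodMk
      · exact hasDerivAt_pi.2 fun i => by simpa using (hasDerivAt_id t).const_mul (ω i)
      · exact hasDerivAt_const t x
    have h := (hFd _).hasFDerivAt.comp_hasDerivAt t hcurve
    have heqf : (fun s => y (s, x)) = fun s => F ((fun i => ω i * s), x) :=
      funext fun s => hyF s x
    rw [← hptime t x, ptime, heqf]
    exact h.deriv
  have hY2F : ∀ t x, Y2 (t, x) = fderiv ℝ F ((fun i => ω i * t), x) ((0 : Fin m → ℝ), 1) := by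
    intro t x
    have h := hasDerivAt_comp_snd F hFd (fun i => ω i * t) x
    have heqf : (fun s => y (t, s)) = fun s => F ((fun i => ω i * t), s) :=
      funext fun s => hyF t s
    rw [← hpspace t x, pspace, heqf]
    exact h.deriv
  have hMG : ∀ t, M t = G fun i => ω i * t := by
    intro t
    rw [hM, hG]
    simp only
    apply intervalIntegral.integral_congr
    intro x _
    show Y1 (t, x) * Y2 (t, x) = _
    rw [hY1F t x, hY2F t x]
  have hGcont : Continuous G := by
    rw [hG]
    apply continuous_parametric_intervalIntegral_of_continuous'
    have : Continuous fun q : (Fin m → ℝ) × ℝ =>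
        (fderiv ℝ F q (ω, 0)) * (fderiv ℝ F q ((0 : Fin m → ℝ), 1)) :=
      ((hF1.continuous).clm_apply continuous_const).mul
        ((hF1.continuous).clm_apply continuous_const)
    exact this
  have hGper : ∀ (θ : Fin m → ℝ) (i : Fin m),
      G (θ + (2 * Real.pi) • (Pi.single i 1 : Fin m → ℝ)) = G θ := by
    intro θ i
    rw [hG]
    simp only
    apply intervalIntegral.integral_congr
    intro x _
    have htr : ∀ w : (Fin m → ℝ) × ℝ,
        F (w + ((2 * Real.pi) • (Pi.single i 1 : Fin m → ℝ), (0:ℝ))) = F w := by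
      intro w
      obtain ⟨θ', x'⟩ := w
      rw [Prod.mk_add_mk, add_zero]
      exact hFper θ' x' i
    have hh := fderiv_translation F hFd _ htr (θ, x)
    rw [show ((θ, x) : (Fin m → ℝ) × ℝ) + ((2 * Real.pi) • (Pi.single i 1 : Fin m → ℝ), (0:ℝ))
        = (θ + (2 * Real.pi) • (Pi.single i 1 : Fin m → ℝ), x) by
      rw [Prod.mk_add_mk, add_zero]] at hh
    show (fderiv ℝ F (θ + (2 * Real.pi) • (Pi.single i 1 : Fin m → ℝ), x)) (ω, 0)
        * (fderiv ℝ F (θ + (2 * Real.pi) • (Pi.single i 1 : Fin m → ℝ), x)) ((0 : Fin m → ℝ), 1)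
      = _
    rw [hh]
  -- M is constant, hence P vanishes identically
  have hMconst : ∀ t, M t = M 0 := monotone_qp_const ω G hGcont hGper M hMG hmono
  have hHpc : Continuous fun t => ∫ x in (0:ℝ)..(2 * Real.pi), P (t, x) := by
    apply continuous_parametric_intervalIntegral_of_continuous'
    exact hPc
  have hHpnn : ∀ t, 0 ≤ ∫ x in (0:ℝ)..(2 * Real.pi), P (t, x) := fun t =>
    intervalIntegral.integral_nonneg h2π fun x _ => hPnn (t, x)
  have hHp0 : ∀ t, (∫ x in (0:ℝ)..(2 * Real.pi), P (t, x)) = 0 := by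
    intro t0
    have hint0 : (∫ t in (t0 - 1)..(t0 + 1),
        ∫ x in (0:ℝ)..(2 * Real.pi), P (t, x)) = 0 := by
      have h1 : (t0 - 1 : ℝ) ≤ t0 + 1 := by linarith
      have h2 := hMuv (t0 - 1) (t0 + 1) h1
      rw [hMconst (t0 + 1), hMconst (t0 - 1), sub_self] at h2
      have hcongr : (∫ t in (t0 - 1)..(t0 + 1), ∫ x in (0:ℝ)..(2 * Real.pi), D (t, x))
          = ∫ t in (t0 - 1)..(t0 + 1), ∫ x in (0:ℝ)..(2 * Real.pi), P (t, x) :=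
        intervalIntegral.integral_congr (fun t _ => hHt t)
      rw [← hcongr]
      exact h2.symm
    exact zero_of_integral_zero _ hHpc hHpnn (by linarith) (by linarith) hint0
  have hP0 : ∀ t x, P (t, x) = 0 := by
    intro t x0
    have hPtc : Continuous fun x => P (t, x) :=
      hPc.comp (continuous_const.prodMk continuous_id)
    have hPper : Function.Periodic (fun x => P (t, x)) (2 * Real.pi) := by
      intro x
      rw [hP]
      simp only
      rw [hper t x, hY2per t x]
    have hint : (∫ x in (x0 - Real.pi)..(x0 - Real.pi + 2 * Real.pi), P (t, x)) = 0 := by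
      rw [hPper.intervalIntegral_add_eq (x0 - Real.pi) 0, zero_add]
      exact hHp0 t
    exact zero_of_integral_zero _ hPtc (fun x => hPnn (t, x))
      (by linarith) (by linarith) hint
  -- conclude y does not depend on x
  have hzero : ∀ t x, (y (t, x)) ^ (p - 1) * Y2 (t, x) = 0 := by
    intro t x
    have h := hP0 t x
    rw [hP] at h
    simp only at h
    rcases mul_eq_zero.1 h with h' | h'
    · rcases mul_eq_zero.1 h' with h'' | h''
      · exact absurd h'' (Nat.cast_ne_zero.2 hp0.ne')
      · rw [h'', zero_mul]
    · rw [pow_eq_zero_iff (two_ne_zero)] at h'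
      rw [h', mul_zero]
  have hconstx : ∀ t x, y (t, x) = y (t, 0) := by
    intro t x
    have hdiff : Differentiable ℝ fun x' => (y (t, x')) ^ p := fun x' =>
      ((hasDerivAt_comp_snd y hyd t x').pow p).differentiableAt
    have hder : ∀ x', deriv (fun x'' => (y (t, x'')) ^ p) x' = 0 := by
      intro x'
      rw [show (fun x'' => (y (t, x'')) ^ p) = (fun s => y (t, s)) ^ p from rfl]
      rw [((hasDerivAt_comp_snd y hyd t x').pow p).deriv, mul_assoc, hzero t x', mul_zero]
    have hcp := is_const_of_deriv_eq_zero hdiff hder x 0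
    exact (Odd.strictMono_pow (R := ℝ) hp).injective hcp
  have hps0 : ∀ t x, pspace y t x = 0 := by
    intro t x
    rw [pspace, show (fun s => y (t, s)) = fun _ => y (t, 0) from
      funext fun s => hconstx t s, deriv_const]
  refine ⟨hps0, ?_⟩
  intro hf0 t x t' x'
  -- part 2 : f ≡ 0 forces y constant
  have hps20 : ∀ t x, pspace2 y t x = 0 := by
    intro t x
    rw [pspace2, show (fun s => pspace y t s) = fun _ => (0:ℝ) from
      funext fun s => hps0 t s, deriv_const]
  have hpt2 : ∀ s : ℝ, ptime2 y s 0 = 0 := by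
    intro s
    have h := heq s 0
    rw [hps0 s 0, hps20 s 0, hf0] at h
    simpa using h
  have hY1smooth : ContDiff ℝ (⊤ : ℕ∞) Y1 := hy1.clm_apply contDiff_const
  have hY1const : ∀ s : ℝ, Y1 (s, 0) = Y1 (0, 0) := by
    have hcd : Differentiable ℝ fun s : ℝ => Y1 (s, 0) :=
      (hY1smooth.comp (contDiff_id.prodMk contDiff_const)).differentiable (by simp)
    have hder : ∀ s : ℝ, deriv (fun s' => Y1 (s', 0)) s = 0 := by
      intro s
      rw [(hY1t s 0).deriv, ← hptime2 s 0]
      exact hpt2 s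
    exact fun s => is_const_of_deriv_eq_zero hcd hder s 0
  set a : ℝ := Y1 (0, 0) with ha
  set cf : ℝ → ℝ := fun s => y (s, 0) with hcf
  have hlin : ∀ s : ℝ, cf s = cf 0 + a * s := by
    intro s
    have hψd : ∀ u : ℝ, HasDerivAt (fun u' => cf u' - a * u') (0:ℝ) u := by
      intro u
      have h1 : HasDerivAt cf (Y1 (u, 0)) u := hasDerivAt_comp_fst y hyd u 0
      have h2 : HasDerivAt (fun u' : ℝ => a * u') a u := by
        simpa using (hasDerivAt_id u).const_mul a
      have h3 := h1.sub h2
      rw [hY1const u, sub_self] at h3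
      exact h3
    have hc := is_const_of_deriv_eq_zero (fun u => (hψd u).differentiableAt)
      (fun u => (hψd u).deriv) s 0
    simp only [mul_zero, sub_zero] at hc
    linarith [hc]
  have ha0 : a = 0 := by
    by_contra hane
    have habs : 0 < |a| := abs_pos.2 hane
    have hTpos : 0 < 2 / |a| + 1 := by positivity
    have hGcc : Continuous fun θ : Fin m → ℝ => F (θ, 0) :=
      hFc.comp (continuous_id.prodMk continuous_const)
    obtain ⟨δ, hδpos, hδ⟩ := Metric.continuousAt_iff.1 hGcc.continuousAt 1 one_pos
    obtain ⟨t1, ht1, k, hk⟩ := recurrence ω (2 / |a| + 1) δ hTpos hδpos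
    set θ' : Fin m → ℝ := fun i => ω i * t1 - 2 * Real.pi * k i with hθ'
    have hdist : dist θ' (0 : Fin m → ℝ) < δ :=
      (dist_pi_lt_iff hδpos).2 fun i => by
        rw [hθ']; rw [Real.dist_eq, Pi.zero_apply, sub_zero]; exact hk i
    have h1 := hδ hdist
    have hGθ : F (θ' + (fun i => 2 * Real.pi * k i), (0:ℝ)) = F (θ', 0) :=
      per_zm (fun θ => F (θ, 0)) (fun θ i => hFper θ 0 i) θ' k
    have hθsum : θ' + (fun i => 2 * Real.pi * k i) = fun i => ω i * t1 := by
      funext i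
      rw [hθ']
      simp only [Pi.add_apply]
      ring
    rw [hθsum] at hGθ
    have hcf1 : cf t1 = F (θ', 0) := by
      rw [hcf]
      simp only
      rw [hyF t1 0, hGθ]
    have hcf0 : cf 0 = F ((0 : Fin m → ℝ), 0) := by
      rw [hcf]
      simp only
      rw [hyF 0 0, show (fun i => ω i * 0) = (0 : Fin m → ℝ) from
        funext fun i => mul_zero _]
    have hsmall : |cf t1 - cf 0| < 1 := by
      rw [hcf1, hcf0, ← Real.dist_eq]
      exact h1
    have ht1pos : 0 < t1 := lt_of_lt_of_le hTpos ht1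
    have hbig : |cf t1 - cf 0| = |a| * t1 := by
      rw [hlin t1]
      rw [show cf 0 + a * t1 - cf 0 = a * t1 by ring, abs_mul, abs_of_pos ht1pos]
    have h2a : 2 / |a| * |a| = 2 := div_mul_cancel₀ 2 (ne_of_gt habs)
    nlinarith [hbig, hsmall, mul_le_mul_of_nonneg_left ht1 (le_of_lt habs)]
  calc y (t, x) = cf t := hconstx t x
    _ = cf 0 := by rw [hlin t, ha0, zero_mul, add_zero]
    _ = cf t' := by rw [hlin t', ha0, zero_mul, add_zero]
    _ = y (t', x') := (hconstx t' x').symm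
end

section
/- If y : ℝ × ℝ → ℝ is smooth, 2π-periodic in x, and satisfies the derivative wave equation y_tt − y_xx = (y_t)² at every point of ℝ² (in particular y is defined for all times), then y is constant. -/
open Real MeasureTheory intervalIntegral Set

noncomputable def Dt (y : ℝ × ℝ → ℝ) : ℝ × ℝ → ℝ := fun p => fderiv ℝ y p (1, 0)
noncomputable def Dx (y : ℝ × ℝ → ℝ) : ℝ × ℝ → ℝ := fun p => fderiv ℝ y p (0, 1)

lemma Dt_contDiff {y : ℝ × ℝ → ℝ} (hy : ContDiff ℝ (⊤ : ℕ∞) y) : ContDiff ℝ (⊤ : ℕ∞) (Dt y) :=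
  (hy.fderiv_right (by simp)).clm_apply contDiff_const

lemma Dx_contDiff {y : ℝ × ℝ → ℝ} (hy : ContDiff ℝ (⊤ : ℕ∞) y) : ContDiff ℝ (⊤ : ℕ∞) (Dx y) :=
  (hy.fderiv_right (by simp)).clm_apply contDiff_const

lemma slice_t {y : ℝ × ℝ → ℝ} (hy : Differentiable ℝ y) (t x : ℝ) :
    HasDerivAt (fun s => y (s, x)) (Dt y (t, x)) t := by
  have h1 : HasDerivAt (fun s : ℝ => (s, x)) ((1 : ℝ), (0 : ℝ)) t :=
    (hasDerivAt_id t).prodMk (hasDerivAt_const t x)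
  exact (hy (t, x)).hasFDerivAt.comp_hasDerivAt t h1

lemma slice_x {y : ℝ × ℝ → ℝ} (hy : Differentiable ℝ y) (t x : ℝ) :
    HasDerivAt (fun s => y (t, s)) (Dx y (t, x)) x := by
  have h1 : HasDerivAt (fun s : ℝ => (t, s)) ((0 : ℝ), (1 : ℝ)) x :=
    (hasDerivAt_const x t).prodMk (hasDerivAt_id x)
  exact (hy (t, x)).hasFDerivAt.comp_hasDerivAt x h1

lemma ptime_eq {y : ℝ × ℝ → ℝ} (hy : Differentiable ℝ y) (t x : ℝ) :
    deriv (fun s => y (s, x)) t = Dt y (t, x) := (slice_t hy t x).deriv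

lemma pspace_eq {y : ℝ × ℝ → ℝ} (hy : Differentiable ℝ y) (t x : ℝ) :
    deriv (fun s => y (t, s)) x = Dx y (t, x) := (slice_x hy t x).deriv

/-- Periodicity in `x` passes to `Dx`. -/
lemma Dx_periodic {y : ℝ × ℝ → ℝ} (hy : Differentiable ℝ y)
    (hper : ∀ t x : ℝ, y (t, x + 2 * π) = y (t, x)) (t x : ℝ) :
    Dx y (t, x + 2 * π) = Dx y (t, x) := by
  rw [← pspace_eq hy, ← pspace_eq hy]
  rw [← deriv_comp_add_const (fun s => y (t, s)) (2 * π) x]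
  congr 1
  funext s
  exact hper t s

/-- Periodicity in `x` passes to `Dt`. -/
lemma Dt_periodic {y : ℝ × ℝ → ℝ} (hy : Differentiable ℝ y)
    (hper : ∀ t x : ℝ, y (t, x + 2 * π) = y (t, x)) (t x : ℝ) :
    Dt y (t, x + 2 * π) = Dt y (t, x) := by
  rw [← ptime_eq hy, ← ptime_eq hy]
  congr 1
  funext s
  exact hper s x

section exp
variable {y : ℝ × ℝ → ℝ} (hy : ContDiff ℝ (⊤ : ℕ∞) y)
include hy

/-- The auxiliary function `u = exp (-y)`. -/
noncomputable def uu (y : ℝ × ℝ → ℝ) : ℝ × ℝ → ℝ := fun p => Real.exp (-(y p))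

lemma uu_contDiff : ContDiff ℝ (⊤ : ℕ∞) (uu y) := Real.contDiff_exp.comp hy.neg

omit hy in
lemma uu_pos (p : ℝ × ℝ) : 0 < uu y p := Real.exp_pos _

lemma Dt_uu (t x : ℝ) : Dt (uu y) (t, x) = -(Dt y (t, x)) * uu y (t, x) := by
  have h : HasDerivAt (fun s => uu y (s, x))
      (Real.exp (-(y (t, x))) * (-(Dt y (t, x)))) t :=
    ((slice_t (hy.differentiable (by simp)) t x).neg).exp
  have h2 := slice_t ((uu_contDiff hy).differentiable (by simp)) t x
  rw [h2.unique h]; unfold uu; ring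

lemma Dx_uu (t x : ℝ) : Dx (uu y) (t, x) = -(Dx y (t, x)) * uu y (t, x) := by
  have h : HasDerivAt (fun s => uu y (t, s))
      (Real.exp (-(y (t, x))) * (-(Dx y (t, x)))) x :=
    ((slice_x (hy.differentiable (by simp)) t x).neg).exp
  have h2 := slice_x ((uu_contDiff hy).differentiable (by simp)) t x
  rw [h2.unique h]; unfold uu; ring

lemma DtDt_uu (t x : ℝ) :
    Dt (Dt (uu y)) (t, x) =
      ((Dt y (t, x)) ^ 2 - Dt (Dt y) (t, x)) * uu y (t, x) := by
  have hDy : Differentiable ℝ (Dt y) := (Dt_contDiff hy).differentiable (by simp)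
  have hu : Differentiable ℝ (uu y) := (uu_contDiff hy).differentiable (by simp)
  have h : HasDerivAt (fun s => -(Dt y (s, x)) * uu y (s, x))
      (-(Dt (Dt y) (t, x)) * uu y (t, x) +
        -(Dt y (t, x)) * (-(Dt y (t, x)) * uu y (t, x))) t := by
    have h1 := (slice_t hDy t x).neg
    have h2 := slice_t hu t x
    rw [Dt_uu hy t x] at h2
    exact h1.mul h2
  have heqfun : (fun s => Dt (uu y) (s, x)) = fun s => -(Dt y (s, x)) * uu y (s, x) := by
    funext s; exact Dt_uu hy s x
  have h3 := slice_t ((Dt_contDiff (uu_contDiff hy)).differentiable (by simp)) t x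
  rw [heqfun] at h3
  rw [h3.unique h]; ring

lemma DxDx_uu (t x : ℝ) :
    Dx (Dx (uu y)) (t, x) =
      ((Dx y (t, x)) ^ 2 - Dx (Dx y) (t, x)) * uu y (t, x) := by
  have hDy : Differentiable ℝ (Dx y) := (Dx_contDiff hy).differentiable (by simp)
  have hu : Differentiable ℝ (uu y) := (uu_contDiff hy).differentiable (by simp)
  have h : HasDerivAt (fun s => -(Dx y (t, s)) * uu y (t, s))
      (-(Dx (Dx y) (t, x)) * uu y (t, x) +
        -(Dx y (t, x)) * (-(Dx y (t, x)) * uu y (t, x))) x := by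
    have h1 := (slice_x hDy t x).neg
    have h2 := slice_x hu t x
    rw [Dx_uu hy t x] at h2
    exact h1.mul h2
  have heqfun : (fun s => Dx (uu y) (t, s)) = fun s => -(Dx y (t, s)) * uu y (t, s) := by
    funext s; exact Dx_uu hy t s
  have h3 := slice_x ((Dx_contDiff (uu_contDiff hy)).differentiable (by simp)) t x
  rw [heqfun] at h3
  rw [h3.unique h]; ring

end exp

/-- Differentiation under the interval integral, for smooth integrands. -/
lemma hasDerivAt_int {f : ℝ × ℝ → ℝ} (hf : ContDiff ℝ (⊤ : ℕ∞) f) (t₀ : ℝ) :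
    HasDerivAt (fun t => ∫ x in (0:ℝ)..(2 * π), f (t, x))
      (∫ x in (0:ℝ)..(2 * π), Dt f (t₀, x)) t₀ := by
  have hπ : (0:ℝ) ≤ 2 * π := by positivity
  have hcf : Continuous f := hf.continuous
  have hcf' : Continuous (Dt f) := (Dt_contDiff hf).continuous
  have hK : IsCompact ((Icc (t₀ - 1) (t₀ + 1)) ×ˢ (Icc (0:ℝ) (2 * π))) :=
    isCompact_Icc.prod isCompact_Icc
  obtain ⟨C, hC⟩ := hK.exists_bound_of_continuousOn hcf'.continuousOn
  have key := intervalIntegral.hasDerivAt_integral_of_dominated_loc_of_deriv_le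
    (F := fun t x => f (t, x)) (F' := fun t x => Dt f (t, x)) (x₀ := t₀)
    (a := (0:ℝ)) (b := 2 * π) (μ := volume) (bound := fun _ => C)
    (s := Metric.ball t₀ 1) (Metric.ball_mem_nhds t₀ one_pos)
    (Filter.Eventually.of_forall fun t =>
      (hcf.comp (continuous_const.prodMk continuous_id)).aestronglyMeasurable)
    ((hcf.comp (continuous_const.prodMk continuous_id)).intervalIntegrable _ _)
    (hcf'.comp (continuous_const.prodMk continuous_id)).aestronglyMeasurable
    ?_ (intervalIntegrable_const) ?_
  · exact key.2
  · refine Filter.Eventually.of_forall fun x hx t ht => ?_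
    refine hC (t, x) ⟨?_, ?_⟩
    · rw [Metric.mem_ball, Real.dist_eq] at ht
      constructor <;> [linarith [abs_lt.mp ht]; linarith [abs_lt.mp ht]]
    · rw [Set.uIoc_of_le hπ] at hx
      exact ⟨le_of_lt hx.1, hx.2⟩
  · exact Filter.Eventually.of_forall fun x _ t _ =>
      slice_t (hf.differentiable (by simp)) t x



/-- (Fritz John) The equation `y_tt - y_xx = y_t^2` on ℝ × 𝕋 has no global smooth
solutions except the constants. -/
theorem fritz_john_no_global_solutions
    (y : ℝ × ℝ → ℝ) (hy : ContDiff ℝ (⊤ : ℕ∞) y)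
    (hper : ∀ t x : ℝ, y (t, x + 2 * Real.pi) = y (t, x))
    (heq : ∀ t x : ℝ, ptime2 y t x - pspace2 y t x = (ptime y t x) ^ 2) :
    ∀ t x t' x' : ℝ, y (t, x) = y (t', x') := by
  have hπ : (0:ℝ) < 2 * π := by positivity
  have hydiff : Differentiable ℝ y := hy.differentiable (by simp)
  have hu : ContDiff ℝ (⊤ : ℕ∞) (uu y) := uu_contDiff hy
  have hudiff : Differentiable ℝ (uu y) := hu.differentiable (by simp)
  have hDtydiff : Differentiable ℝ (Dt y) := (Dt_contDiff hy).differentiable (by simp)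
  have hDxydiff : Differentiable ℝ (Dx y) := (Dx_contDiff hy).differentiable (by simp)
  have hper_u : ∀ t x : ℝ, uu y (t, x + 2 * π) = uu y (t, x) := by
    intro t x; unfold uu; rw [hper]
  -- rewrite the equation in terms of `Dt`, `Dx`
  have hpt : ∀ t x : ℝ, ptime y t x = Dt y (t, x) := fun t x => ptime_eq hydiff t x
  have hpt2 : ∀ t x : ℝ, ptime2 y t x = Dt (Dt y) (t, x) := by
    intro t x
    have hfun : (fun s => ptime y s x) = fun s => Dt y (s, x) :=
      funext fun s => hpt s x
    show deriv (fun s => ptime y s x) t = _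
    rw [hfun]; exact ptime_eq hDtydiff t x
  have hpx2 : ∀ t x : ℝ, pspace2 y t x = Dx (Dx y) (t, x) := by
    intro t x
    have hfun : (fun s => pspace y t s) = fun s => Dx y (t, s) :=
      funext fun s => pspace_eq hydiff t s
    show deriv (fun s => pspace y t s) x = _
    rw [hfun]; exact pspace_eq hDxydiff t x
  have heq' : ∀ t x : ℝ, Dt (Dt y) (t, x) - Dx (Dx y) (t, x) = (Dt y (t, x)) ^ 2 := by
    intro t x
    rw [← hpt2, ← hpx2, ← hpt]; exact heq t x
  -- the wave identity for `u = exp (-y)`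
  have hwave : ∀ t x : ℝ,
      Dt (Dt (uu y)) (t, x) =
        Dx (Dx (uu y)) (t, x) + -((Dx y (t, x)) ^ 2) * uu y (t, x) := by
    intro t x
    rw [DtDt_uu hy, DxDx_uu hy]
    linear_combination (-(uu y (t, x))) * heq' t x
  -- the integrals
  set I : ℝ → ℝ := fun t => ∫ x in (0:ℝ)..(2 * π), uu y (t, x) with hIdef
  set J : ℝ → ℝ := fun t => ∫ x in (0:ℝ)..(2 * π), Dt (uu y) (t, x) with hJdef
  have hI : ∀ t, HasDerivAt I (J t) t := fun t => hasDerivAt_int hu t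
  have hJ : ∀ t, HasDerivAt J (∫ x in (0:ℝ)..(2 * π), Dt (Dt (uu y)) (t, x)) t :=
    fun t => hasDerivAt_int (Dt_contDiff hu) t
  have hJcont : Continuous J :=
    continuous_iff_continuousAt.2 fun t => (hJ t).continuousAt
  -- FTC : the space term integrates to zero
  have hftc : ∀ t : ℝ, (∫ x in (0:ℝ)..(2 * π), Dx (Dx (uu y)) (t, x)) = 0 := by
    intro t
    have hd : ∀ x ∈ uIcc (0:ℝ) (2 * π),
        HasDerivAt (fun s => Dx (uu y) (t, s)) (Dx (Dx (uu y)) (t, x)) x :=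
      fun x _ => slice_x ((Dx_contDiff hu).differentiable (by simp)) t x
    rw [intervalIntegral.integral_eq_sub_of_hasDerivAt hd
      (((Dx_contDiff (Dx_contDiff hu)).continuous.comp
        (continuous_const.prodMk continuous_id)).intervalIntegrable _ _)]
    have h0 : Dx (uu y) (t, 0 + 2 * π) = Dx (uu y) (t, 0) :=
      Dx_periodic hudiff hper_u t 0
    rw [zero_add] at h0
    rw [h0, sub_self]
  -- value of J'
  have hKval : ∀ t : ℝ, (∫ x in (0:ℝ)..(2 * π), Dt (Dt (uu y)) (t, x)) =
      -∫ x in (0:ℝ)..(2 * π), (Dx y (t, x)) ^ 2 * uu y (t, x) := by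
    intro t
    have hint1 : IntervalIntegrable (fun x => Dx (Dx (uu y)) (t, x)) volume 0 (2 * π) :=
      ((Dx_contDiff (Dx_contDiff hu)).continuous.comp
        (continuous_const.prodMk continuous_id)).intervalIntegrable _ _
    have hint2 : IntervalIntegrable (fun x => -((Dx y (t, x)) ^ 2) * uu y (t, x))
        volume 0 (2 * π) := by
      apply Continuous.intervalIntegrable
      have h1 : Continuous (fun x : ℝ => Dx y (t, x)) :=
        (Dx_contDiff hy).continuous.comp (continuous_const.prodMk continuous_id)
      have h2 : Continuous (fun x : ℝ => uu y (t, x)) :=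
        hu.continuous.comp (continuous_const.prodMk continuous_id)
      continuity
    calc (∫ x in (0:ℝ)..(2 * π), Dt (Dt (uu y)) (t, x))
        = ∫ x in (0:ℝ)..(2 * π),
            (Dx (Dx (uu y)) (t, x) + -((Dx y (t, x)) ^ 2) * uu y (t, x)) := by
          apply intervalIntegral.integral_congr
          intro x _
          exact hwave t x
      _ = (∫ x in (0:ℝ)..(2 * π), Dx (Dx (uu y)) (t, x))
            + ∫ x in (0:ℝ)..(2 * π), -((Dx y (t, x)) ^ 2) * uu y (t, x) :=
          intervalIntegral.integral_add hint1 hint2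
      _ = ∫ x in (0:ℝ)..(2 * π), -((Dx y (t, x)) ^ 2) * uu y (t, x) := by
          rw [hftc t, zero_add]
      _ = -∫ x in (0:ℝ)..(2 * π), (Dx y (t, x)) ^ 2 * uu y (t, x) := by
          rw [← intervalIntegral.integral_neg]
          apply intervalIntegral.integral_congr
          intro x _
          ring
  have hgnonneg : ∀ t : ℝ, 0 ≤ ∫ x in (0:ℝ)..(2 * π), (Dx y (t, x)) ^ 2 * uu y (t, x) := by
    intro t
    apply intervalIntegral.integral_nonneg hπ.le
    intro x _
    have := uu_pos (y := y) (t, x)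
    positivity
  have hKnonpos : ∀ t : ℝ, (∫ x in (0:ℝ)..(2 * π), Dt (Dt (uu y)) (t, x)) ≤ 0 := by
    intro t
    rw [hKval t]
    linarith [hgnonneg t]
  have hJanti : Antitone J :=
    antitone_of_deriv_nonpos (fun t => (hJ t).differentiableAt)
      (fun t => by rw [(hJ t).deriv]; exact hKnonpos t)
  have hInn : ∀ t, 0 ≤ I t := by
    intro t
    apply intervalIntegral.integral_nonneg hπ.le
    intro x _
    exact (uu_pos (y := y) (t, x)).le
  have hJint : ∀ a b : ℝ, IntervalIntegrable J volume a b :=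
    fun a b => hJcont.intervalIntegrable a b
  -- J vanishes identically
  have hJ0 : ∀ t, J t = 0 := by
    intro t₀
    rcases lt_trichotomy (J t₀) 0 with hc | hc | hc
    · -- forward in time
      exfalso
      set c := J t₀ with hcdef
      set T := t₀ + (I t₀ + 1) / (-c) with hTdef
      have hT : t₀ ≤ T := by
        have h0 : 0 < (I t₀ + 1) / (-c) := by
          apply div_pos; linarith [hInn t₀]; linarith
        rw [hTdef]; linarith
      have hIT : (∫ s in t₀..T, J s) = I T - I t₀ :=
        intervalIntegral.integral_eq_sub_of_hasDerivAt (fun s _ => hI s) (hJint _ _)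
      have hmono : (∫ s in t₀..T, J s) ≤ ∫ _ in t₀..T, c :=
        intervalIntegral.integral_mono_on hT (hJint _ _) intervalIntegrable_const
          (fun s hs => hJanti hs.1)
      rw [intervalIntegral.integral_const, smul_eq_mul] at hmono
      have hcne : c ≠ 0 := ne_of_lt hc
      have hTc : (T - t₀) * c = -(I t₀ + 1) := by
        rw [hTdef]
        field_simp
        ring
      rw [hIT, hTc] at hmono
      have := hInn T
      linarith
    · exact hc
    · -- backward in time
      exfalso
      set c := J t₀ with hcdef
      set T := t₀ - (I t₀ + 1) / c with hTdef
      have hT : T ≤ t₀ := by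
        have h0 : 0 < (I t₀ + 1) / c := by
          apply div_pos; linarith [hInn t₀]; linarith
        rw [hTdef]; linarith
      have hIT : (∫ s in T..t₀, J s) = I t₀ - I T :=
        intervalIntegral.integral_eq_sub_of_hasDerivAt (fun s _ => hI s) (hJint _ _)
      have hmono : (∫ _ in T..t₀, c) ≤ ∫ s in T..t₀, J s :=
        intervalIntegral.integral_mono_on hT intervalIntegrable_const (hJint _ _)
          (fun s hs => hJanti hs.2)
      rw [intervalIntegral.integral_const, smul_eq_mul] at hmono
      have hcne : c ≠ 0 := ne_of_gt hc
      have hTc : (t₀ - T) * c = I t₀ + 1 := by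
        rw [hTdef]
        field_simp
        ring
      rw [hIT, hTc] at hmono
      have := hInn T
      linarith
  -- hence J' = 0 and the space derivative vanishes
  have hK0 : ∀ t : ℝ, (∫ x in (0:ℝ)..(2 * π), Dt (Dt (uu y)) (t, x)) = 0 := by
    intro t
    have hJfun : J = fun _ => (0:ℝ) := funext hJ0
    have h := hJ t
    rw [hJfun] at h
    exact h.unique (hasDerivAt_const t 0)
  have hg0 : ∀ t : ℝ, (∫ x in (0:ℝ)..(2 * π), (Dx y (t, x)) ^ 2 * uu y (t, x)) = 0 := by
    intro t
    have := hK0 t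
    rw [hKval t] at this
    linarith
  -- pointwise vanishing of y_x
  have hDxy0 : ∀ t x : ℝ, Dx y (t, x) = 0 := by
    intro t
    have hgcont : Continuous (fun x : ℝ => (Dx y (t, x)) ^ 2 * uu y (t, x)) := by
      have h1 : Continuous (fun x : ℝ => Dx y (t, x)) :=
        (Dx_contDiff hy).continuous.comp (continuous_const.prodMk continuous_id)
      have h2 : Continuous (fun x : ℝ => uu y (t, x)) :=
        hu.continuous.comp (continuous_const.prodMk continuous_id)
      continuity
    have hgint : IntervalIntegrable (fun x : ℝ => (Dx y (t, x)) ^ 2 * uu y (t, x))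
        volume 0 (2 * π) := hgcont.intervalIntegrable _ _
    have hae : (fun x : ℝ => (Dx y (t, x)) ^ 2 * uu y (t, x))
        =ᵐ[volume.restrict (Ioc (0:ℝ) (2 * π))] 0 := by
      refine (intervalIntegral.integral_eq_zero_iff_of_le_of_nonneg_ae hπ.le ?_ hgint).1 (hg0 t)
      refine Filter.Eventually.of_forall fun x => ?_
      have := uu_pos (y := y) (t, x)
      positivity
    have heqon : EqOn (fun x : ℝ => (Dx y (t, x)) ^ 2 * uu y (t, x)) 0 (Ioc (0:ℝ) (2 * π)) := by
      apply MeasureTheory.Measure.eqOn_of_ae_eq hae hgcont.continuousOn continuousOn_const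
      rw [interior_Ioc, closure_Ioo (by positivity : (0:ℝ) ≠ 2 * π)]
      exact Ioc_subset_Icc_self
    have hIoc : ∀ x ∈ Ioc (0:ℝ) (2 * π), Dx y (t, x) = 0 := by
      intro x hx
      have h := heqon hx
      simp only [Pi.zero_apply] at h
      have hupos := uu_pos (y := y) (t, x)
      have : (Dx y (t, x)) ^ 2 = 0 := by
        by_contra hne
        have : 0 < (Dx y (t, x)) ^ 2 := lt_of_le_of_ne (sq_nonneg _) (Ne.symm hne)
        nlinarith
      exact (pow_eq_zero_iff two_ne_zero).mp this
    -- extend by periodicity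
    intro x
    have hperDx : Function.Periodic (fun s => Dx y (t, s)) (2 * π) :=
      fun s => Dx_periodic hydiff hper t s
    obtain hmem := sub_toIocDiv_zsmul_mem_Ioc hπ 0 x
    rw [zero_add] at hmem
    have := hperDx.sub_zsmul_eq (x := x) (toIocDiv hπ 0 x)
    calc Dx y (t, x) = Dx y (t, x - toIocDiv hπ 0 x • (2 * π)) := this.symm
      _ = 0 := hIoc _ hmem
  -- y is constant in space
  have hspace : ∀ t x : ℝ, y (t, x) = y (t, 0) := by
    intro t x
    have hdiff : Differentiable ℝ (fun s => y (t, s)) :=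
      fun s => ((slice_x hydiff t s).differentiableAt)
    have hderiv0 : ∀ s : ℝ, deriv (fun s => y (t, s)) s = 0 := by
      intro s
      rw [pspace_eq hydiff t s]
      exact hDxy0 t s
    exact is_const_of_deriv_eq_zero hdiff hderiv0 x 0
  -- the second space derivative also vanishes
  have hDxDxy0 : ∀ t x : ℝ, Dx (Dx y) (t, x) = 0 := by
    intro t x
    have h := slice_x hDxydiff t x
    have hfun : (fun s => Dx y (t, s)) = fun _ => (0:ℝ) := funext fun s => hDxy0 t s
    rw [hfun] at h
    exact h.unique (hasDerivAt_const x 0)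
  -- u_tt vanishes identically
  have hutt0 : ∀ t x : ℝ, Dt (Dt (uu y)) (t, x) = 0 := by
    intro t x
    rw [hwave t x, DxDx_uu hy, hDxy0 t x, hDxDxy0 t x]
    ring
  -- the time slice h = u (·, 0)
  have hslice : ∀ t : ℝ, HasDerivAt (fun s => uu y (s, 0)) (Dt (uu y) (t, 0)) t :=
    fun t => slice_t hudiff t 0
  have hslice' : ∀ t : ℝ, HasDerivAt (fun s => Dt (uu y) (s, 0)) 0 t := by
    intro t
    have h := slice_t ((Dt_contDiff hu).differentiable (by simp)) t 0
    rwa [hutt0 t 0] at h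
  have hbconst : ∀ t : ℝ, Dt (uu y) (t, 0) = Dt (uu y) (0, 0) := by
    intro t
    exact is_const_of_deriv_eq_zero (fun s => (hslice' s).differentiableAt)
      (fun s => (hslice' s).deriv) t 0
  set b := Dt (uu y) (0, 0) with hbdef
  have haffine : ∀ t : ℝ, uu y (t, 0) = uu y (0, 0) + b * t := by
    intro t
    have hφ : ∀ s : ℝ, HasDerivAt (fun r => uu y (r, 0) - b * r) 0 s := by
      intro s
      have h1 := hslice s
      rw [hbconst s] at h1
      have h2 := h1.sub ((hasDerivAt_id s).const_mul b)
      rw [mul_one, sub_self] at h2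
      exact h2
    have := is_const_of_deriv_eq_zero (fun s => (hφ s).differentiableAt)
      (fun s => (hφ s).deriv) t 0
    simp only [mul_zero, sub_zero] at this
    linarith [this]
  have hb0 : b = 0 := by
    by_contra hb
    have h1 := uu_pos (y := y) (((-1 - uu y (0, 0)) / b), 0)
    rw [haffine ((-1 - uu y (0, 0)) / b)] at h1
    rw [mul_div_cancel₀ _ hb] at h1
    linarith
  have htime : ∀ t : ℝ, y (t, 0) = y (0, 0) := by
    intro t
    have h := haffine t
    rw [hb0, zero_mul, add_zero] at h
    unfold uu at h
    have := Real.exp_injective h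
    linarith [neg_injective this]
  intro t x t' x'
  rw [hspace t x, hspace t' x', htime t, htime t']
end

section
/- Let p be an even positive integer. If y : ℝ × ℝ → ℝ is a smooth solution of the derivative wave equation y_tt − y_xx = (y_x)^p on ℝ × 𝕋 (i.e. 2π-periodic in x) which is quasi-periodic in time, then y is constant. -/
open Real

/-! ### Auxiliary lemmas -/

section Aux

lemma floor_fract_close {x y : ℝ} {M : ℕ} (hM : 0 < M)
    (h : ⌊Int.fract x * M⌋₊ = ⌊Int.fract y * M⌋₊) :
    |Int.fract x - Int.fract y| < 1 / M := by
  have hMr : (0:ℝ) < M := by exact_mod_cast hM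
  have hx0 : (0:ℝ) ≤ Int.fract x * M := mul_nonneg (Int.fract_nonneg x) hMr.le
  have hy0 : (0:ℝ) ≤ Int.fract y * M := mul_nonneg (Int.fract_nonneg y) hMr.le
  have lx := Nat.floor_le hx0
  have ly := Nat.floor_le hy0
  have ux := Nat.lt_floor_add_one (Int.fract x * M)
  have uy := Nat.lt_floor_add_one (Int.fract y * M)
  rw [h] at lx ux
  rw [abs_sub_lt_iff]
  constructor <;> rw [lt_div_iff₀ hMr] <;> rw [sub_mul] <;> linarith

/-- Kronecker-type recurrence: for any vector `v`, arbitrarily large integer times `n`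
bring `n • v` arbitrarily close to the lattice `2π ℤ^d`. -/
lemma recur (d : ℕ) (v : Fin d → ℝ) {ε : ℝ} (hε : 0 < ε) (T : ℝ) :
    ∃ n : ℕ, T ≤ n ∧ ∃ k : Fin d → ℤ, ∀ i, |(n:ℝ) * v i - 2 * Real.pi * k i| < ε := by
  have h2π : (0:ℝ) < 2 * π := by positivity
  set u : Fin d → ℝ := fun i => v i / (2 * π) with hu
  have hε' : 0 < ε / (2 * π) := by positivity
  obtain ⟨M', hM'⟩ := exists_nat_one_div_lt hε'
  set M : ℕ := M' + 1 with hM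
  have hMpos : 0 < M := Nat.succ_pos _
  have hMr : (0:ℝ) < M := by exact_mod_cast hMpos
  set f : ℕ → (Fin d → Fin M) := fun n i =>
    ⟨⌊Int.fract ((n:ℝ) * u i) * M⌋₊, by
      rw [Nat.floor_lt (mul_nonneg (Int.fract_nonneg _) hMr.le)]
      calc Int.fract ((n:ℝ) * u i) * M < 1 * M :=
            mul_lt_mul_of_pos_right (Int.fract_lt_one _) hMr
        _ = M := one_mul _⟩ with hf
  obtain ⟨c, hc⟩ := Finite.exists_infinite_fiber f
  have hS : (f ⁻¹' {c}).Infinite := Set.infinite_coe_iff.mp hc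
  obtain ⟨a, ha⟩ := hS.nonempty
  obtain ⟨b, hb, hab⟩ := hS.exists_gt (a + ⌈T⌉₊)
  have haleb : a ≤ b := by omega
  refine ⟨b - a, ?_, fun i => ⌊(b:ℝ) * u i⌋ - ⌊(a:ℝ) * u i⌋, fun i => ?_⟩
  · have h1 : ⌈T⌉₊ ≤ b - a := by omega
    have : (⌈T⌉₊ : ℝ) ≤ ((b - a : ℕ) : ℝ) := by exact_mod_cast h1
    linarith [Nat.le_ceil T]
  · have hcast : ((b - a : ℕ) : ℝ) = (b:ℝ) - (a:ℝ) := by rw [Nat.cast_sub haleb]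
    have hfib : f b i = f a i := by
      have hb' : f b = c := hb
      have ha' : f a = c := ha
      rw [hb', ha']
    have hfl : ⌊Int.fract ((b:ℝ) * u i) * M⌋₊ = ⌊Int.fract ((a:ℝ) * u i) * M⌋₊ := by
      have := congrArg Fin.val hfib
      simpa [hf] using this
    have hclose := floor_fract_close hMpos hfl
    have key : ((b - a : ℕ) : ℝ) * u i - ((⌊(b:ℝ) * u i⌋ - ⌊(a:ℝ) * u i⌋ : ℤ) : ℝ)
        = Int.fract ((b:ℝ) * u i) - Int.fract ((a:ℝ) * u i) := by
      rw [hcast]; unfold Int.fract; push_cast; ring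
    have h1M : (1:ℝ)/M ≤ 1/(M'+1) := by norm_num [hM]
    have hlt : |((b - a : ℕ) : ℝ) * u i - ((⌊(b:ℝ) * u i⌋ - ⌊(a:ℝ) * u i⌋ : ℤ) : ℝ)| < ε / (2*π) := by
      rw [key]; exact lt_of_lt_of_le hclose (le_trans h1M (le_of_lt (by exact_mod_cast hM')))
    have hvi : v i = 2 * π * u i := by simp only [hu]; field_simp
    have harg : ((b-a:ℕ):ℝ) * v i - 2 * π * ((⌊(b:ℝ) * u i⌋ - ⌊(a:ℝ) * u i⌋ : ℤ) : ℝ)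
        = (2*π) * (((b-a:ℕ):ℝ) * u i - ((⌊(b:ℝ) * u i⌋ - ⌊(a:ℝ) * u i⌋ : ℤ):ℝ)) := by
      rw [hvi]; ring
    rw [harg, abs_mul, abs_of_pos h2π]
    calc (2*π) * |((b-a:ℕ):ℝ) * u i - ((⌊(b:ℝ) * u i⌋ - ⌊(a:ℝ) * u i⌋ : ℤ):ℝ)|
        < (2*π) * (ε / (2*π)) := mul_lt_mul_of_pos_left hlt h2π
      _ = ε := by field_simp

lemma smul_single_one {d : ℕ} (i : Fin d) (c : ℝ) :
    c • (Pi.single i 1 : Fin d → ℝ) = Pi.single i c := by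
  funext j
  simp [Pi.single_apply]

lemma periodic_int_shift {d : ℕ} (K : (Fin d → ℝ) → ℝ)
    (hKper : ∀ (z : Fin d → ℝ) (i : Fin d), K (z + (2 * π) • (Pi.single i 1 : Fin d → ℝ)) = K z)
    (i : Fin d) : ∀ (n : ℤ) (z : Fin d → ℝ),
      K (z + (2 * π * n) • (Pi.single i 1 : Fin d → ℝ)) = K z := by
  intro n
  induction n using Int.induction_on with
  | zero => intro z; simp
  | succ n ih =>
      intro z
      have : z + (2 * π * ((n:ℤ)+1 : ℤ)) • (Pi.single i 1 : Fin d → ℝ)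
          = (z + (2 * π * (n:ℤ)) • (Pi.single i 1 : Fin d → ℝ)) + (2*π) • (Pi.single i 1 : Fin d → ℝ) := by
        push_cast
        module
      rw [this, hKper, ih]
  | pred n ih =>
      intro z
      have e2 : z + (2 * π * (-(n:ℤ)-1 : ℤ)) • (Pi.single i 1 : Fin d → ℝ) + (2*π) • (Pi.single i 1 : Fin d → ℝ)
          = z + (2 * π * (-(n:ℤ) : ℤ)) • (Pi.single i 1 : Fin d → ℝ) := by push_cast; module
      have h1 := hKper (z + (2 * π * (-(n:ℤ)-1 : ℤ)) • (Pi.single i 1 : Fin d → ℝ)) i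
      rw [e2] at h1
      rw [← h1, ih]

lemma periodic_shift {d : ℕ} (K : (Fin d → ℝ) → ℝ)
    (hKper : ∀ (z : Fin d → ℝ) (i : Fin d), K (z + (2 * π) • (Pi.single i 1 : Fin d → ℝ)) = K z)
    (z : Fin d → ℝ) (k : Fin d → ℤ) :
    K (z + fun i => 2 * π * k i) = K z := by
  have key : ∀ s : Finset (Fin d), K (z + ∑ i ∈ s, (2 * π * k i) • (Pi.single i 1 : Fin d → ℝ)) = K z := by
    intro s
    induction s using Finset.induction_on with
    | empty => simp
    | insert _ _ hni ih =>
        rename_i j s'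
        rw [Finset.sum_insert hni]
        have : z + ((2 * π * k j) • (Pi.single j 1 : Fin d → ℝ) + ∑ i ∈ s', (2 * π * k i) • (Pi.single i 1 : Fin d → ℝ))
            = (z + ∑ i ∈ s', (2 * π * k i) • (Pi.single i 1 : Fin d → ℝ)) + (2 * π * (k j : ℤ)) • (Pi.single j 1 : Fin d → ℝ) := by
          push_cast; module
        rw [this, periodic_int_shift K hKper j (k j), ih]
  have := key Finset.univ
  have e : ∑ i : Fin d, (2 * π * k i) • (Pi.single i 1 : Fin d → ℝ) = fun i => 2 * π * k i := by
    have := Finset.univ_sum_single (fun i : Fin d => 2 * π * (k i : ℝ))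
    rw [← this]
    congr 1
    funext i
    rw [smul_single_one]
  rwa [e] at this

/-- A monotone "quasi-periodic" function of a real variable is constant. -/
lemma monotone_qp_const_s4 {d : ℕ} (K : (Fin d → ℝ) → ℝ) (hK : Continuous K)
    (hKper : ∀ (z : Fin d → ℝ) (i : Fin d), K (z + (2 * π) • (Pi.single i 1 : Fin d → ℝ)) = K z)
    (θ₀ v : Fin d → ℝ)
    (hmono : Monotone fun t : ℝ => K (θ₀ + t • v)) :
    ∀ a b : ℝ, K (θ₀ + a • v) = K (θ₀ + b • v) := by
  have main : ∀ a b : ℝ, a ≤ b → K (θ₀ + b • v) ≤ K (θ₀ + a • v) := by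
    intro a b hab
    apply le_of_forall_pos_le_add
    intro ε hε
    have hcont : ContinuousAt K (θ₀ + a • v) := hK.continuousAt
    obtain ⟨δ, hδ, hδ'⟩ := Metric.continuousAt_iff.mp hcont ε hε
    obtain ⟨n, hn, k, hk⟩ := recur d v hδ (b - a)
    set z := θ₀ + (a + n) • v with hz
    have hper' : K (z + fun i => 2 * π * ((-k i : ℤ) : ℝ)) = K z :=
      periodic_shift K hKper z (fun i => - k i)
    have hdist : dist (z + fun i => 2 * π * ((-k i : ℤ) : ℝ)) (θ₀ + a • v) < δ := by
      rw [dist_pi_lt_iff hδ]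
      intro i
      have : (z + fun i => 2 * π * ((-k i : ℤ) : ℝ)) i - (θ₀ + a • v) i
          = (n:ℝ) * v i - 2 * π * (k i : ℝ) := by
        simp only [hz, Pi.add_apply, Pi.smul_apply, smul_eq_mul]
        push_cast
        ring
      rw [Real.dist_eq, this]
      exact hk i
    have hKlt : |K (z + fun i => 2 * π * ((-k i : ℤ) : ℝ)) - K (θ₀ + a • v)| < ε := by
      rw [← Real.dist_eq]; exact hδ' hdist
    have h1 : K z < K (θ₀ + a • v) + ε := by
      rw [← hper']
      have := abs_sub_lt_iff.mp hKlt
      linarith [this.1]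
    have h2 : K (θ₀ + b • v) ≤ K z := by
      have : b ≤ a + n := by linarith
      exact hmono this
    linarith
  intro a b
  rcases le_total a b with h | h
  · exact le_antisymm (hmono h) (main a b h)
  · exact le_antisymm (main b a h) (hmono h)

/-! ### Calculus helpers -/

lemma line_hasDerivAt (g : ℝ × ℝ → ℝ) (hg : Differentiable ℝ g) {γ : ℝ → ℝ × ℝ}
    {γ' : ℝ × ℝ} {t : ℝ} (hγ : HasDerivAt γ γ' t) :
    HasDerivAt (fun s => g (γ s)) (fderiv ℝ g (γ t) γ') t := by
  exact (hg (γ t)).hasFDerivAt.comp_hasDerivAt t hγ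

lemma line2_hasDerivAt (g : ℝ × ℝ → ℝ) (hg : ContDiff ℝ (⊤ : ℕ∞) g) (w : ℝ × ℝ) {γ : ℝ → ℝ × ℝ}
    {γ' : ℝ × ℝ} {t : ℝ} (hγ : HasDerivAt γ γ' t) :
    HasDerivAt (fun s => fderiv ℝ g (γ s) w) (fderiv ℝ (fderiv ℝ g) (γ t) γ' w) t := by
  have hD : ContDiff ℝ (⊤ : ℕ∞) (fderiv ℝ g) := hg.fderiv_right (by simp)
  have hDdiff : Differentiable ℝ (fderiv ℝ g) := hD.differentiable (by simp)
  have h1 : HasFDerivAt (fun z => fderiv ℝ g z w)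
      ((fderiv ℝ (fderiv ℝ g) (γ t)).flip w) (γ t) := by
    have := (hDdiff (γ t)).hasFDerivAt.clm_apply (hasFDerivAt_const w (γ t))
    simpa using this
  exact h1.comp_hasDerivAt t hγ

lemma fderiv_periodic {E : Type*} [NormedAddCommGroup E] [NormedSpace ℝ E]
    (G : E → ℝ) (hG : Differentiable ℝ G) (c : E) (h : ∀ z, G (z + c) = G z) (z : E) :
    fderiv ℝ G (z + c) = fderiv ℝ G z := by
  have hc : HasFDerivAt (fun z : E => z + c) (ContinuousLinearMap.id ℝ E) z :=
    (hasFDerivAt_id z).add_const c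
  have h2 : HasFDerivAt (G ∘ fun z => z + c)
      ((fderiv ℝ G (z + c)).comp (ContinuousLinearMap.id ℝ E)) z :=
    (hG (z + c)).hasFDerivAt.comp z hc
  have h3 : (G ∘ fun z : E => z + c) = G := funext fun z => h z
  rw [h3, ContinuousLinearMap.comp_id] at h2
  exact h2.unique (hG z).hasFDerivAt

/-- Coordinate-shift periodicity for the "unfolded" torus function. -/
lemma K_shift_eval {m : ℕ} (G : (Fin m → ℝ) × ℝ → ℝ)
    (hG1 : ∀ (θ : Fin m → ℝ) (x : ℝ) (i : Fin m),
      G (θ + (2 * π) • (Pi.single i 1 : Fin m → ℝ), x) = G (θ, x))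
    (hG2 : ∀ (θ : Fin m → ℝ) (x : ℝ), G (θ, x + 2 * π) = G (θ, x))
    (u : Fin (m+1) → ℝ) (j : Fin (m+1)) :
    G ((fun i => (u + (2 * π) • (Pi.single j 1 : Fin (m+1) → ℝ)) i.succ),
       (u + (2 * π) • (Pi.single j 1 : Fin (m+1) → ℝ)) 0)
      = G ((fun i => u i.succ), u 0) := by
  refine Fin.cases ?_ ?_ j
  · have e1 : (fun i : Fin m => (u + (2 * π) • (Pi.single (0 : Fin (m+1)) 1 : Fin (m+1) → ℝ)) i.succ)
        = fun i => u i.succ := by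
      funext i
      simp [Pi.single_eq_of_ne (Fin.succ_ne_zero i)]
    have e2 : (u + (2 * π) • (Pi.single (0 : Fin (m+1)) 1 : Fin (m+1) → ℝ)) 0 = u 0 + 2 * π := by
      simp
    rw [e1, e2, hG2]
  · intro j'
    have e1 : (fun i : Fin m => (u + (2 * π) • (Pi.single j'.succ 1 : Fin (m+1) → ℝ)) i.succ)
        = (fun i => u i.succ) + (2 * π) • (Pi.single j' 1 : Fin m → ℝ) := by
      funext i
      simp only [Pi.add_apply, Pi.smul_apply, smul_eq_mul]
      congr 1
      rw [Pi.single_apply, Pi.single_apply]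
      congr 1
      simp [Fin.succ_inj]
    have e2 : (u + (2 * π) • (Pi.single j'.succ 1 : Fin (m+1) → ℝ)) 0 = u 0 := by
      simp [Pi.single_eq_of_ne (Fin.succ_ne_zero j').symm, Pi.single_eq_of_ne (Ne.symm (Fin.succ_ne_zero j'))]
    rw [e1, e2, hG1]

end Aux

/-- For even `p`, the equation `y_tt - y_xx = y_x^p` has no smooth, spatially
2π-periodic, time-quasi-periodic solutions except the constants. -/
theorem no_quasiperiodic_even_yxp
    (p : ℕ) (hp : Even p) (hp0 : 0 < p)
    (y : ℝ × ℝ → ℝ) (hy : ContDiff ℝ (⊤ : ℕ∞) y)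
    (hper : ∀ t x : ℝ, y (t, x + 2 * Real.pi) = y (t, x))
    (hqp : QuasiPeriodicInTime y)
    (heq : ∀ t x : ℝ, ptime2 y t x - pspace2 y t x = (pspace y t x) ^ p) :
    ∀ t x t' x' : ℝ, y (t, x) = y (t', x') := by
  obtain ⟨m, ω, F, hF, hFper1, hFper2, hyF⟩ := hqp
  have hyd : Differentiable ℝ y := hy.differentiable (by simp)
  have hFd : Differentiable ℝ F := hF.differentiable (by simp)
  -- the linear map (t, x) ↦ (ω t, x)
  set Φl : ℝ × ℝ →L[ℝ] (Fin m → ℝ) × ℝ :=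
    (ContinuousLinearMap.pi fun i => (ω i) • ContinuousLinearMap.id ℝ ℝ).prodMap
      (ContinuousLinearMap.id ℝ ℝ) with hΦl
  have hΦ : ∀ z : ℝ × ℝ, Φl z = ((fun i => ω i * z.1), z.2) := by
    intro z
    rw [hΦl]
    ext <;> simp [mul_comm]
  have hyΦ : y = F ∘ Φl := by
    funext z
    rw [Function.comp_apply, hΦ]
    exact hyF z.1 z.2
  have hfderiv_y : ∀ z : ℝ × ℝ, fderiv ℝ y z = (fderiv ℝ F (Φl z)).comp Φl := by
    intro z
    have h1 : HasFDerivAt y ((fderiv ℝ F (Φl z)).comp Φl) z := by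
      rw [hyΦ]
      exact (hFd (Φl z)).hasFDerivAt.comp z Φl.hasFDerivAt
    exact h1.fderiv
  have hΦ11 : Φl ((1:ℝ),(1:ℝ)) = (ω, (1:ℝ)) := by
    rw [hΦ]
    simp
  -- first partial derivatives via fderiv
  have hpt : ∀ t x : ℝ, ptime y t x = fderiv ℝ y (t, x) ((1:ℝ),(0:ℝ)) := by
    intro t x
    exact (line_hasDerivAt y hyd ((hasDerivAt_id t).prodMk (hasDerivAt_const t x))).deriv
  have hps : ∀ t x : ℝ, pspace y t x = fderiv ℝ y (t, x) ((0:ℝ),(1:ℝ)) := by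
    intro t x
    exact (line_hasDerivAt y hyd ((hasDerivAt_const x t).prodMk (hasDerivAt_id x))).deriv
  -- second partial derivatives via the second fderiv
  have hpt2 : ∀ t x : ℝ, ptime2 y t x
      = fderiv ℝ (fderiv ℝ y) (t, x) ((1:ℝ),(0:ℝ)) ((1:ℝ),(0:ℝ)) := by
    intro t x
    have e : (fun s => ptime y s x) = fun s => fderiv ℝ y (s, x) ((1:ℝ),(0:ℝ)) :=
      funext fun s => hpt s x
    show deriv (fun s => ptime y s x) t = _
    rw [e]
    exact (line2_hasDerivAt y hy (1,0) ((hasDerivAt_id t).prodMk (hasDerivAt_const t x))).deriv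
  have hps2 : ∀ t x : ℝ, pspace2 y t x
      = fderiv ℝ (fderiv ℝ y) (t, x) ((0:ℝ),(1:ℝ)) ((0:ℝ),(1:ℝ)) := by
    intro t x
    have e : (fun s => pspace y t s) = fun s => fderiv ℝ y (t, s) ((0:ℝ),(1:ℝ)) :=
      funext fun s => hps t s
    show deriv (fun s => pspace y t s) x = _
    rw [e]
    exact (line2_hasDerivAt y hy (0,1) ((hasDerivAt_const x t).prodMk (hasDerivAt_id x))).deriv
  -- symmetry of second derivative
  have hsymm : ∀ (z : ℝ × ℝ) (v w : ℝ × ℝ),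
      fderiv ℝ (fderiv ℝ y) z v w = fderiv ℝ (fderiv ℝ y) z w v := by
    intro z v w
    have hD : Differentiable ℝ (fderiv ℝ y) := (hy.fderiv_right (m := 1) (WithTop.coe_le_coe.mpr le_top)).differentiable (by simp)
    exact second_derivative_symmetric (fun u => (hyd u).hasFDerivAt) (hD z).hasFDerivAt v w
  -- fderiv of F is periodic
  have hG1fd : ∀ (θ : Fin m → ℝ) (x : ℝ) (i : Fin m),
      fderiv ℝ F (θ + (2 * Real.pi) • (Pi.single i 1 : Fin m → ℝ), x) = fderiv ℝ F (θ, x) := by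
    intro θ x i
    have hc : ∀ z : (Fin m → ℝ) × ℝ,
        F (z + ((2 * Real.pi) • (Pi.single i 1 : Fin m → ℝ), (0:ℝ))) = F z := by
      intro z
      have h1 : z + ((2 * Real.pi) • (Pi.single i 1 : Fin m → ℝ), (0:ℝ))
          = (z.1 + (2 * Real.pi) • (Pi.single i 1 : Fin m → ℝ), z.2) := by
        ext <;> simp
      rw [h1]
      exact hFper1 z.1 z.2 i
    have h2 := fderiv_periodic F hFd _ hc (θ, x)
    have h3 : ((θ, x) : (Fin m → ℝ) × ℝ) + ((2 * Real.pi) • (Pi.single i 1 : Fin m → ℝ), (0:ℝ))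
        = (θ + (2 * Real.pi) • (Pi.single i 1 : Fin m → ℝ), x) := by
      ext <;> simp
    rwa [h3] at h2
  have hG2fd : ∀ (θ : Fin m → ℝ) (x : ℝ),
      fderiv ℝ F (θ, x + 2 * Real.pi) = fderiv ℝ F (θ, x) := by
    intro θ x
    have hc : ∀ z : (Fin m → ℝ) × ℝ, F (z + ((0 : Fin m → ℝ), 2 * Real.pi)) = F z := by
      intro z
      have h1 : z + ((0 : Fin m → ℝ), 2 * Real.pi) = (z.1, z.2 + 2 * Real.pi) := by
        ext <;> simp
      rw [h1]
      exact hFper2 z.1 z.2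
    have h2 := fderiv_periodic F hFd _ hc (θ, x)
    have h3 : ((θ, x) : (Fin m → ℝ) × ℝ) + ((0 : Fin m → ℝ), 2 * Real.pi)
        = (θ, x + 2 * Real.pi) := by
      ext <;> simp
    rwa [h3] at h2
  -- the unfolded torus function for the characteristic derivative
  set K : (Fin (m+1) → ℝ) → ℝ :=
    fun u => fderiv ℝ F ((fun i => u i.succ), u 0) (ω, (1:ℝ)) with hKdef
  have hKcont : Continuous K := by
    apply Continuous.clm_apply ?_ continuous_const
    exact (hF.continuous_fderiv (by simp)).comp
      (Continuous.prodMk (continuous_pi fun i => continuous_apply _) (continuous_apply 0))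
  have hKper : ∀ (u : Fin (m+1) → ℝ) (j : Fin (m+1)),
      K (u + (2 * Real.pi) • (Pi.single j 1 : Fin (m+1) → ℝ)) = K u :=
    fun u j => K_shift_eval (fun z => fderiv ℝ F z (ω, (1:ℝ)))
      (fun θ x i => by simp only [hG1fd]) (fun θ x => by simp only [hG2fd]) u j
  -- Step A: the space derivative vanishes identically
  have hpspace0 : ∀ t x : ℝ, pspace y t x = 0 := by
    intro t₀ xx
    set x₀ := xx + t₀ with hx₀
    have hγ : ∀ t : ℝ, HasDerivAt (fun s : ℝ => (s, x₀ - s)) ((1:ℝ), (-1:ℝ)) t := fun t =>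
      (hasDerivAt_id t).prodMk ((hasDerivAt_id t).const_sub x₀)
    have hder : ∀ t : ℝ, HasDerivAt (fun s => fderiv ℝ y (s, x₀ - s) ((1:ℝ),(1:ℝ)))
        ((pspace y t (x₀ - t))^p) t := by
      intro t
      have h1 := line2_hasDerivAt y hy (1,1) (hγ t)
      have hval : fderiv ℝ (fderiv ℝ y) (t, x₀ - t) ((1:ℝ),(-1:ℝ)) ((1:ℝ),(1:ℝ))
          = (pspace y t (x₀ - t))^p := by
        have e1 : ((1:ℝ),(-1:ℝ)) = ((1:ℝ),(0:ℝ)) - ((0:ℝ),(1:ℝ)) := by norm_num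
        have e2 : ((1:ℝ),(1:ℝ)) = ((1:ℝ),(0:ℝ)) + ((0:ℝ),(1:ℝ)) := by norm_num
        rw [e1, e2, map_sub, ContinuousLinearMap.sub_apply, map_add, map_add]
        have hs := hsymm (t, x₀ - t) ((1:ℝ),(0:ℝ)) ((0:ℝ),(1:ℝ))
        have hA := hpt2 t (x₀ - t)
        have hB := hps2 t (x₀ - t)
        have hC := heq t (x₀ - t)
        linarith
      exact hval ▸ h1
    set θv : Fin (m+1) → ℝ := Fin.cons x₀ (0 : Fin m → ℝ) with hθv
    set Vv : Fin (m+1) → ℝ := Fin.cons (-1 : ℝ) ω with hVv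
    have heval : ∀ t : ℝ, K (θv + t • Vv) = fderiv ℝ y (t, x₀ - t) ((1:ℝ),(1:ℝ)) := by
      intro t
      have h1 : (fun i => (θv + t • Vv) i.succ : Fin m → ℝ) = fun i => ω i * t := by
        funext i
        simp only [hθv, hVv, Pi.add_apply, Pi.smul_apply, Fin.cons_succ, Pi.zero_apply,
          smul_eq_mul]
        ring
      have h2 : (θv + t • Vv) 0 = x₀ - t := by
        simp only [hθv, hVv, Pi.add_apply, Pi.smul_apply, Fin.cons_zero, smul_eq_mul]
        ring
      rw [hfderiv_y (t, x₀ - t), ContinuousLinearMap.comp_apply, hΦ11, hΦ (t, x₀ - t)]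
      show fderiv ℝ F ((fun i => (θv + t • Vv) i.succ : Fin m → ℝ), (θv + t • Vv) 0) (ω, 1) = _
      rw [h1, h2]
    have hmono : Monotone (fun t : ℝ => K (θv + t • Vv)) := by
      have e : (fun t : ℝ => K (θv + t • Vv))
          = fun s => fderiv ℝ y (s, x₀ - s) ((1:ℝ),(1:ℝ)) := funext heval
      rw [e]
      refine monotone_of_deriv_nonneg (fun t => (hder t).differentiableAt) (fun t => ?_)
      rw [(hder t).deriv]
      exact hp.pow_nonneg _
    have hconst := monotone_qp_const_s4 K hKcont hKper θv Vv hmono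
    have h0 : (pspace y t₀ (x₀ - t₀))^p = 0 := by
      have hconstf : (fun s : ℝ => fderiv ℝ y (s, x₀ - s) ((1:ℝ),(1:ℝ)))
          = fun _ => fderiv ℝ y ((0:ℝ), x₀ - (0:ℝ)) ((1:ℝ),(1:ℝ)) := by
        funext s
        rw [← heval s, ← heval 0, hconst s 0]
      have h2 := hder t₀
      rw [hconstf] at h2
      exact ((hasDerivAt_const t₀ _).unique h2).symm
    have hxx : x₀ - t₀ = xx := by rw [hx₀]; ring
    rw [hxx] at h0
    exact (pow_eq_zero_iff hp0.ne').mp h0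
  -- Step B: y is constant in space
  have hxconst : ∀ t x x' : ℝ, y (t, x) = y (t, x') := by
    intro t x x'
    have hdiff : Differentiable ℝ (fun s => y (t, s)) := fun s =>
      (line_hasDerivAt y hyd ((hasDerivAt_const s t).prodMk (hasDerivAt_id s))).differentiableAt
    exact is_const_of_deriv_eq_zero hdiff (fun s => hpspace0 t s) x x'
  -- Step C: second derivatives vanish
  have hps2_0 : ∀ t x : ℝ, pspace2 y t x = 0 := by
    intro t x
    have e : (fun s => pspace y t s) = fun _ : ℝ => (0:ℝ) := funext fun s => hpspace0 t s
    show deriv (fun s => pspace y t s) x = 0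
    rw [e, deriv_const]
  have hpt2_0 : ∀ t x : ℝ, ptime2 y t x = 0 := by
    intro t x
    have h1 := heq t x
    rw [hpspace0 t x, hps2_0 t x, zero_pow hp0.ne'] at h1
    linarith
  -- Step D: the time derivative is constant
  have hq : ∀ t : ℝ, HasDerivAt (fun s => ptime y s 0) (0:ℝ) t := by
    intro t
    have e : (fun s => ptime y s 0) = fun s => fderiv ℝ y (s, (0:ℝ)) ((1:ℝ),(0:ℝ)) :=
      funext fun s => hpt s 0
    rw [e]
    have h1 : HasDerivAt (fun s => fderiv ℝ y (s, (0:ℝ)) ((1:ℝ),(0:ℝ)))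
        (fderiv ℝ (fderiv ℝ y) (t, (0:ℝ)) ((1:ℝ),(0:ℝ)) ((1:ℝ),(0:ℝ))) t :=
      line2_hasDerivAt y hy (1,0) ((hasDerivAt_id t).prodMk (hasDerivAt_const t (0:ℝ)))
    have h2 : fderiv ℝ (fderiv ℝ y) (t, (0:ℝ)) ((1:ℝ),(0:ℝ)) ((1:ℝ),(0:ℝ)) = 0 := by
      rw [← hpt2 t 0]
      exact hpt2_0 t 0
    rwa [h2] at h1
  have hqconst : ∀ s : ℝ, ptime y s 0 = ptime y 0 0 :=
    fun s => is_const_of_deriv_eq_zero (fun t => (hq t).differentiableAt)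
      (fun t => (hq t).deriv) s 0
  set c := ptime y 0 0 with hc
  have hg : ∀ t : ℝ, HasDerivAt (fun s => y (s, (0:ℝ))) c t := by
    intro t
    have h1 : HasDerivAt (fun s => y (s, (0:ℝ))) (fderiv ℝ y (t, (0:ℝ)) ((1:ℝ),(0:ℝ))) t :=
      line_hasDerivAt y hyd ((hasDerivAt_id t).prodMk (hasDerivAt_const t (0:ℝ)))
    have h2 : fderiv ℝ y (t, (0:ℝ)) ((1:ℝ),(0:ℝ)) = c := by
      rw [← hpt t 0]
      exact hqconst t
    rwa [h2] at h1
  -- Step E: y is constant in time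
  set K₂ : (Fin (m+1) → ℝ) → ℝ := fun u => F ((fun i => u i.succ), u 0) with hK₂def
  have hK₂cont : Continuous K₂ :=
    hF.continuous.comp
      (Continuous.prodMk (continuous_pi fun i => continuous_apply _) (continuous_apply 0))
  have hK₂per : ∀ (u : Fin (m+1) → ℝ) (j : Fin (m+1)),
      K₂ (u + (2 * Real.pi) • (Pi.single j 1 : Fin (m+1) → ℝ)) = K₂ u :=
    fun u j => K_shift_eval F hFper1 hFper2 u j
  set Vv₂ : Fin (m+1) → ℝ := Fin.cons (0 : ℝ) ω with hVv₂
  have heval₂ : ∀ t : ℝ, K₂ ((0 : Fin (m+1) → ℝ) + t • Vv₂) = y (t, 0) := by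
    intro t
    have h1 : (fun i => ((0 : Fin (m+1) → ℝ) + t • Vv₂) i.succ : Fin m → ℝ)
        = fun i => ω i * t := by
      funext i
      simp only [hVv₂, Pi.add_apply, Pi.smul_apply, Fin.cons_succ, Pi.zero_apply, smul_eq_mul]
      ring
    have h2 : ((0 : Fin (m+1) → ℝ) + t • Vv₂) 0 = 0 := by
      simp [hVv₂]
    show F ((fun i => ((0 : Fin (m+1) → ℝ) + t • Vv₂) i.succ : Fin m → ℝ),
      ((0 : Fin (m+1) → ℝ) + t • Vv₂) 0) = y (t, 0)
    rw [h1, h2, hyF t 0]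
  have htime : ∀ a b : ℝ, y (a, (0:ℝ)) = y (b, (0:ℝ)) := by
    rcases le_total 0 c with hcs | hcs
    · intro a b
      have hmono : Monotone (fun t : ℝ => K₂ ((0 : Fin (m+1) → ℝ) + t • Vv₂)) := by
        have e : (fun t : ℝ => K₂ ((0 : Fin (m+1) → ℝ) + t • Vv₂)) = fun t => y (t, (0:ℝ)) :=
          funext heval₂
        rw [e]
        refine monotone_of_deriv_nonneg (fun t => (hg t).differentiableAt) (fun t => ?_)
        rw [(hg t).deriv]
        exact hcs
      have h1 := monotone_qp_const_s4 K₂ hK₂cont hK₂per 0 Vv₂ hmono a b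
      rwa [heval₂ a, heval₂ b] at h1
    · intro a b
      have hmono : Monotone (fun t : ℝ => (fun u => - K₂ u) ((0 : Fin (m+1) → ℝ) + t • Vv₂)) := by
        have e : (fun t : ℝ => (fun u => - K₂ u) ((0 : Fin (m+1) → ℝ) + t • Vv₂))
            = fun t => - y (t, (0:ℝ)) := by
          funext s
          simp only
          rw [heval₂ s]
        rw [e]
        refine monotone_of_deriv_nonneg (fun t => ((hg t).neg).differentiableAt) (fun t => ?_)
        rw [show deriv (fun t => -y (t, 0)) t = -c from ((hg t).neg).deriv]
        linarith
      have h1 := monotone_qp_const_s4 (fun u => - K₂ u) hK₂cont.neg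
        (fun z i => by show -K₂ _ = -K₂ _; rw [hK₂per z i]) 0 Vv₂ hmono a b
      rw [heval₂ a, heval₂ b] at h1
      linarith
  intro t x t' x'
  calc y (t, x) = y (t, 0) := hxconst t x 0
    _ = y (t', 0) := htime t t'
    _ = y (t', x') := hxconst t' 0 x'
end

section
/- Let p be an even positive integer. If y : ℝ × ℝ → ℝ is a smooth solution of the derivative wave equation y_tt − y_xx = (y_t)^p on ℝ × 𝕋 (i.e. 2π-periodic in x) which is quasi-periodic in time, then y is constant. -/
open MeasureTheory intervalIntegral Set

lemma hasDerivAt_fst' (g : ℝ × ℝ → ℝ) (hg : ContDiff ℝ (⊤ : ℕ∞) g) (t x : ℝ) :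
    HasDerivAt (fun s => g (s, x)) (fderiv ℝ g (t, x) (1, 0)) t := by
  have h1 : HasFDerivAt g (fderiv ℝ g (t, x)) (t, x) :=
    (hg.differentiable (by simp) (t, x)).hasFDerivAt
  have h2 : HasDerivAt (fun s : ℝ => (s, x)) ((1 : ℝ), (0 : ℝ)) t :=
    (hasDerivAt_id t).prodMk (hasDerivAt_const t x)
  exact h1.comp_hasDerivAt t h2

lemma hasDerivAt_snd' (g : ℝ × ℝ → ℝ) (hg : ContDiff ℝ (⊤ : ℕ∞) g) (t x : ℝ) :
    HasDerivAt (fun s => g (t, s)) (fderiv ℝ g (t, x) (0, 1)) x := by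
  have h1 : HasFDerivAt g (fderiv ℝ g (t, x)) (t, x) :=
    (hg.differentiable (by simp) (t, x)).hasFDerivAt
  have h2 : HasDerivAt (fun s : ℝ => (t, s)) ((0 : ℝ), (1 : ℝ)) x :=
    (hasDerivAt_const x t).prodMk (hasDerivAt_id x)
  exact h1.comp_hasDerivAt x h2

lemma contDiff_fderiv_apply (g : ℝ × ℝ → ℝ) (hg : ContDiff ℝ (⊤ : ℕ∞) g) (v : ℝ × ℝ) :
    ContDiff ℝ (⊤ : ℕ∞) (fun q => fderiv ℝ g q v) :=
  (ContinuousLinearMap.apply ℝ ℝ v).contDiff.comp (hg.fderiv_right (by simp))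

lemma param_hasDerivAt (g g' : ℝ × ℝ → ℝ) (hgc : Continuous g) (hg'c : Continuous g')
    (hd : ∀ t x, HasDerivAt (fun s => g (s, x)) (g' (t, x)) t) (a b t0 : ℝ) :
    HasDerivAt (fun t => ∫ x in a..b, g (t, x)) (∫ x in a..b, g' (t0, x)) t0 := by
  obtain ⟨M, hM⟩ : ∃ M, ∀ q ∈ (Icc (t0 - 1) (t0 + 1)) ×ˢ (uIcc a b), ‖g' q‖ ≤ M :=
    ((isCompact_Icc.prod isCompact_uIcc).exists_bound_of_continuousOn hg'c.continuousOn)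
  have key := intervalIntegral.hasDerivAt_integral_of_dominated_loc_of_deriv_le
    (F := fun t x => g (t, x)) (F' := fun t x => g' (t, x)) (x₀ := t0)
    (a := a) (b := b) (μ := volume) (bound := fun _ => M) (Metric.ball_mem_nhds t0 one_pos)
    (Filter.Eventually.of_forall fun t =>
      ((hgc.comp (continuous_const.prodMk continuous_id)).aestronglyMeasurable).restrict)
    ((hgc.comp (continuous_const.prodMk continuous_id)).intervalIntegrable a b)
    (((hg'c.comp (continuous_const.prodMk continuous_id)).aestronglyMeasurable).restrict)
    (Filter.Eventually.of_forall fun x hx t ht => by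
      apply hM
      constructor
      · rw [Metric.mem_ball, Real.dist_eq] at ht
        constructor <;> [linarith [abs_lt.1 ht |>.1]; linarith [abs_lt.1 ht |>.2]]
      · exact uIoc_subset_uIcc hx)
    (intervalIntegrable_const)
    (Filter.Eventually.of_forall fun x hx t ht => hd t x)
  exact key.2

lemma shift_int {m : ℕ} (F : (Fin m → ℝ) × ℝ → ℝ)
    (hFθ : ∀ (θ : Fin m → ℝ) (x : ℝ) (i : Fin m),
      F (θ + (2 * Real.pi) • (Pi.single i 1 : Fin m → ℝ), x) = F (θ, x))
    (i : Fin m) (k : ℤ) (θ : Fin m → ℝ) (x : ℝ) :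
    F (θ + ((2 * Real.pi) * k) • (Pi.single i 1 : Fin m → ℝ), x) = F (θ, x) := by
  induction k using Int.induction_on with
  | zero => simp
  | succ n ih =>
    have h : ((2 * Real.pi) * ((n : ℤ) + 1 : ℤ) : ℝ) • (Pi.single i 1 : Fin m → ℝ)
        = ((2 * Real.pi) * n) • (Pi.single i 1 : Fin m → ℝ)
          + (2 * Real.pi) • (Pi.single i 1 : Fin m → ℝ) := by
      rw [← add_smul]; push_cast; ring_nf
    rw [h, ← add_assoc, hFθ]
    exact_mod_cast ih
  | pred n ih =>
    have h : ((2 * Real.pi) * (-(n : ℤ) : ℤ) : ℝ) • (Pi.single i 1 : Fin m → ℝ)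
        = ((2 * Real.pi) * (-(n : ℤ) - 1 : ℤ)) • (Pi.single i 1 : Fin m → ℝ)
          + (2 * Real.pi) • (Pi.single i 1 : Fin m → ℝ) := by
      rw [← add_smul]; push_cast; ring_nf
    calc F (θ + ((2 * Real.pi) * (-(n : ℤ) - 1 : ℤ)) • (Pi.single i 1 : Fin m → ℝ), x)
        = F ((θ + ((2 * Real.pi) * (-(n : ℤ) - 1 : ℤ)) • (Pi.single i 1 : Fin m → ℝ))
            + (2 * Real.pi) • (Pi.single i 1 : Fin m → ℝ), x) := (hFθ _ _ _).symm
      _ = F (θ + ((2 * Real.pi) * (-(n : ℤ) : ℤ)) • (Pi.single i 1 : Fin m → ℝ), x) := by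
          rw [h, add_assoc]
      _ = F (θ, x) := by exact_mod_cast ih

lemma shift_vec {m : ℕ} (F : (Fin m → ℝ) × ℝ → ℝ)
    (hFθ : ∀ (θ : Fin m → ℝ) (x : ℝ) (i : Fin m),
      F (θ + (2 * Real.pi) • (Pi.single i 1 : Fin m → ℝ), x) = F (θ, x))
    (k : Fin m → ℤ) (θ : Fin m → ℝ) (x : ℝ) :
    F (θ + fun i => (2 * Real.pi) * k i, x) = F (θ, x) := by
  have main : ∀ s : Finset (Fin m),
      F (θ + ∑ i ∈ s, ((2 * Real.pi) * (k i : ℝ)) • (Pi.single i 1 : Fin m → ℝ), x)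
        = F (θ, x) := by
    intro s
    induction s using Finset.induction_on with
    | empty => simp
    | @insert j s hj ih =>
      rw [Finset.sum_insert hj, add_comm (((2 * Real.pi) * (k j : ℝ)) • _), ← add_assoc]
      rw [shift_int F hFθ j (k j) _ x]
      exact ih
  have hsum : (fun i => (2 * Real.pi) * (k i : ℝ))
      = ∑ i : Fin m, ((2 * Real.pi) * (k i : ℝ)) • (Pi.single i 1 : Fin m → ℝ) := by
    funext j
    rw [Finset.sum_apply]
    simp [Pi.single_apply]
  rw [hsum]
  exact main Finset.univ

lemma shift_x {m : ℕ} (F : (Fin m → ℝ) × ℝ → ℝ)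
    (hFx : ∀ (θ : Fin m → ℝ) (x : ℝ), F (θ, x + 2 * Real.pi) = F (θ, x))
    (k : ℤ) (θ : Fin m → ℝ) (x : ℝ) :
    F (θ, x + (2 * Real.pi) * k) = F (θ, x) := by
  induction k using Int.induction_on with
  | zero => simp
  | succ n ih =>
    have h : x + 2 * Real.pi * ((n : ℤ) + 1 : ℤ) = (x + 2 * Real.pi * (n : ℤ)) + 2 * Real.pi := by
      push_cast; ring
    rw [h, hFx, ih]
  | pred n ih =>
    have h : x + 2 * Real.pi * (-(n : ℤ) : ℤ) = (x + 2 * Real.pi * (-(n : ℤ) - 1 : ℤ)) + 2 * Real.pi := by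
      push_cast; ring
    rw [← ih, h, hFx]

lemma qp_bounded {m : ℕ} (F : (Fin m → ℝ) × ℝ → ℝ) (hF : Continuous F)
    (hFθ : ∀ (θ : Fin m → ℝ) (x : ℝ) (i : Fin m),
      F (θ + (2 * Real.pi) • (Pi.single i 1 : Fin m → ℝ), x) = F (θ, x))
    (hFx : ∀ (θ : Fin m → ℝ) (x : ℝ), F (θ, x + 2 * Real.pi) = F (θ, x)) :
    ∃ C : ℝ, ∀ θ x, |F (θ, x)| ≤ C := by
  have h2π : (0 : ℝ) < 2 * Real.pi := by positivity
  obtain ⟨C, hC⟩ : ∃ C, ∀ q ∈ (Set.univ.pi fun _ : Fin m => Icc (0:ℝ) (2 * Real.pi)) ×ˢ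
      Icc (0:ℝ) (2 * Real.pi), ‖F q‖ ≤ C :=
    ((isCompact_univ_pi fun _ => isCompact_Icc).prod isCompact_Icc).exists_bound_of_continuousOn
      hF.continuousOn
  refine ⟨C, fun θ x => ?_⟩
  set k : Fin m → ℤ := fun i => ⌊θ i / (2 * Real.pi)⌋ with hk
  set r : Fin m → ℝ := fun i => θ i - 2 * Real.pi * k i with hr
  set n : ℤ := ⌊x / (2 * Real.pi)⌋ with hn
  set ρ : ℝ := x - 2 * Real.pi * n with hρ
  have hθ : θ = r + fun i => (2 * Real.pi) * k i := by funext i; simp [hr]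
  have hx : x = ρ + (2 * Real.pi) * n := by simp [hρ]
  have frac_mem : ∀ (a : ℝ), 0 ≤ a - 2 * Real.pi * ⌊a / (2 * Real.pi)⌋ ∧
      a - 2 * Real.pi * ⌊a / (2 * Real.pi)⌋ ≤ 2 * Real.pi := by
    intro a
    have h1 := Int.fract_nonneg (a / (2 * Real.pi))
    have h2 := (Int.fract_lt_one (a / (2 * Real.pi))).le
    have he : a - 2 * Real.pi * ⌊a / (2 * Real.pi)⌋
        = (2 * Real.pi) * Int.fract (a / (2 * Real.pi)) := by
      rw [Int.fract]; field_simp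
    constructor
    · rw [he]; positivity
    · rw [he]
      calc (2 * Real.pi) * Int.fract (a / (2 * Real.pi)) ≤ (2 * Real.pi) * 1 := by
            exact mul_le_mul_of_nonneg_left h2 h2π.le
        _ = 2 * Real.pi := mul_one _
  have key : F (θ, x) = F (r, ρ) := by
    rw [hθ, hx, shift_x F hFx, shift_vec F hFθ]
  rw [key, ← Real.norm_eq_abs]
  apply hC
  constructor
  · intro i _
    exact ⟨(frac_mem (θ i)).1, (frac_mem (θ i)).2⟩
  · exact ⟨(frac_mem x).1, (frac_mem x).2⟩


/-- For even `p`, the equation `y_tt - y_xx = y_t^p` has no smooth, spatially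
2π-periodic, time-quasi-periodic solutions except the constants. -/
theorem no_quasiperiodic_even_ytp
    (p : ℕ) (hp : Even p) (hp0 : 0 < p)
    (y : ℝ × ℝ → ℝ) (hy : ContDiff ℝ (⊤ : ℕ∞) y)
    (hper : ∀ t x : ℝ, y (t, x + 2 * Real.pi) = y (t, x))
    (hqp : QuasiPeriodicInTime y)
    (heq : ∀ t x : ℝ, ptime2 y t x - pspace2 y t x = (ptime y t x) ^ p) :
    ∀ t x t' x' : ℝ, y (t, x) = y (t', x') := by
  have hπ : (0:ℝ) < Real.pi := Real.pi_pos
  have h2π : (0:ℝ) < 2 * Real.pi := by positivity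
  set A : ℝ × ℝ → ℝ := fun q => fderiv ℝ y q (1, 0) with hAdef
  set B : ℝ × ℝ → ℝ := fun q => fderiv ℝ y q (0, 1) with hBdef
  have hAc : ContDiff ℝ (⊤ : ℕ∞) A := contDiff_fderiv_apply y hy _
  have hBc : ContDiff ℝ (⊤ : ℕ∞) B := contDiff_fderiv_apply y hy _
  have hpt : ∀ t x, ptime y t x = A (t, x) := fun t x => (hasDerivAt_fst' y hy t x).deriv
  have hps : ∀ t x, pspace y t x = B (t, x) := fun t x => (hasDerivAt_snd' y hy t x).deriv
  have hptd : ∀ t x, HasDerivAt (fun s => y (s, x)) (ptime y t x) t := by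
    intro t x; rw [hpt]; exact hasDerivAt_fst' y hy t x
  have hpsd : ∀ t x, HasDerivAt (fun s => y (t, s)) (pspace y t x) x := by
    intro t x; rw [hps]; exact hasDerivAt_snd' y hy t x
  have hptfun : ∀ x, (fun s => ptime y s x) = fun s => A (s, x) :=
    fun x => funext fun s => hpt s x
  have hpsfun : ∀ t, (fun s => pspace y t s) = fun s => B (t, s) :=
    fun t => funext fun s => hps t s
  have hpt2 : ∀ t x, ptime2 y t x = fderiv ℝ A (t, x) (1, 0) := by
    intro t x
    rw [ptime2, hptfun x]
    exact (hasDerivAt_fst' A hAc t x).deriv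
  have hps2 : ∀ t x, pspace2 y t x = fderiv ℝ B (t, x) (0, 1) := by
    intro t x
    rw [pspace2, hpsfun t]
    exact (hasDerivAt_snd' B hBc t x).deriv
  have hpt2d : ∀ t x, HasDerivAt (fun s => ptime y s x) (ptime2 y t x) t := by
    intro t x
    rw [hptfun x, hpt2]
    exact hasDerivAt_fst' A hAc t x
  have hps2d : ∀ t x, HasDerivAt (fun s => pspace y t s) (pspace2 y t x) x := by
    intro t x
    rw [hpsfun t, hps2]
    exact hasDerivAt_snd' B hBc t x
  have hptc : Continuous (fun q : ℝ × ℝ => ptime y q.1 q.2) := by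
    have he : (fun q : ℝ × ℝ => ptime y q.1 q.2) = A := by
      funext q; rw [hpt q.1 q.2]
    rw [he]; exact hAc.continuous
  have hpt2c : Continuous (fun q : ℝ × ℝ => ptime2 y q.1 q.2) := by
    have he : (fun q : ℝ × ℝ => ptime2 y q.1 q.2) = fun q => fderiv ℝ A q (1, 0) := by
      funext q; rw [hpt2 q.1 q.2]
    rw [he]; exact (contDiff_fderiv_apply A hAc _).continuous
  have hps2c : Continuous (fun q : ℝ × ℝ => pspace2 y q.1 q.2) := by
    have he : (fun q : ℝ × ℝ => pspace2 y q.1 q.2) = fun q => fderiv ℝ B q (0, 1) := by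
      funext q; rw [hps2 q.1 q.2]
    rw [he]; exact (contDiff_fderiv_apply B hBc _).continuous
  -- the integrated quantities
  set G : ℝ → ℝ := fun t => ∫ x in (0:ℝ)..(2 * Real.pi), y (t, x) with hGdef
  set E : ℝ → ℝ := fun t => ∫ x in (0:ℝ)..(2 * Real.pi), ptime y t x with hEdef
  set P : ℝ → ℝ := fun t => ∫ x in (0:ℝ)..(2 * Real.pi), (ptime y t x) ^ p with hPdef
  have hG' : ∀ t, HasDerivAt G (E t) t := fun t =>
    param_hasDerivAt y (fun q => ptime y q.1 q.2) hy.continuous hptc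
      (fun t x => hptd t x) 0 (2 * Real.pi) t
  have hE'raw : ∀ t, HasDerivAt E (∫ x in (0:ℝ)..(2 * Real.pi), ptime2 y t x) t := fun t =>
    param_hasDerivAt (fun q => ptime y q.1 q.2) (fun q => ptime2 y q.1 q.2) hptc hpt2c
      (fun t x => hpt2d t x) 0 (2 * Real.pi) t
  -- ∫ pspace2 over a period vanishes
  have hpsper : ∀ t, Function.Periodic (fun s => y (t, s)) (2 * Real.pi) := fun t s => hper t s
  have hB0 : ∀ t, (∫ x in (0:ℝ)..(2 * Real.pi), pspace2 y t x) = 0 := by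
    intro t
    have hftc : (∫ x in (0:ℝ)..(2 * Real.pi), pspace2 y t x)
        = pspace y t (2 * Real.pi) - pspace y t 0 :=
      intervalIntegral.integral_eq_sub_of_hasDerivAt (fun x _ => hps2d t x)
        ((hps2c.comp (continuous_const.prodMk continuous_id)).intervalIntegrable _ _)
    have hd : pspace y t (2 * Real.pi) = pspace y t 0 := by
      set f : ℝ → ℝ := fun s => y (t, s) with hf
      have hfe : f = fun s => f (s + 2 * Real.pi) :=
        funext fun s => (hper t s).symm
      rw [pspace, pspace, ← hf]
      conv_rhs => rw [hfe]
      rw [deriv_comp_add_const]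
      norm_num
    rw [hftc, hd, sub_self]
  have hE' : ∀ t, HasDerivAt E (P t) t := by
    intro t
    have h1 : (∫ x in (0:ℝ)..(2 * Real.pi), ptime2 y t x) = P t := by
      have hre : ∀ x : ℝ, ptime2 y t x = pspace2 y t x + (ptime y t x) ^ p := by
        intro x; have := heq t x; linarith
      calc (∫ x in (0:ℝ)..(2 * Real.pi), ptime2 y t x)
          = ∫ x in (0:ℝ)..(2 * Real.pi), (pspace2 y t x + (ptime y t x) ^ p) := by
            simp_rw [hre]
        _ = (∫ x in (0:ℝ)..(2 * Real.pi), pspace2 y t x)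
            + ∫ x in (0:ℝ)..(2 * Real.pi), (ptime y t x) ^ p := by
            apply intervalIntegral.integral_add
            · exact (hps2c.comp (continuous_const.prodMk continuous_id)).intervalIntegrable _ _
            · exact ((hptc.comp (continuous_const.prodMk continuous_id)).pow p).intervalIntegrable _ _
        _ = P t := by rw [hB0 t, zero_add]
    rw [← h1]
    exact hE'raw t
  have hPnn : ∀ t, 0 ≤ P t := fun t =>
    intervalIntegral.integral_nonneg h2π.le (fun x _ => hp.pow_nonneg _)
  have hEdiff : Differentiable ℝ E := fun t => (hE' t).differentiableAt
  have hEmono : Monotone E :=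
    monotone_of_deriv_nonneg hEdiff (fun t => by rw [(hE' t).deriv]; exact hPnn t)
  -- boundedness of G
  obtain ⟨m, ω, F, hF, hFθ, hFx, hyF⟩ := hqp
  obtain ⟨C, hC⟩ := qp_bounded F hF.continuous hFθ hFx
  have hyb : ∀ t x, |y (t, x)| ≤ C := fun t x => by rw [hyF t x]; exact hC _ x
  set D : ℝ := C * |2 * Real.pi - 0| with hD
  have hGb : ∀ t, |G t| ≤ D := by
    intro t
    rw [← Real.norm_eq_abs]
    exact intervalIntegral.norm_integral_le_of_norm_le_const
      (fun x _ => by rw [Real.norm_eq_abs]; exact hyb t x)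
  have hDnn : 0 ≤ D := le_trans (abs_nonneg _) (hGb 0)
  -- E vanishes identically
  have hE0 : ∀ t, E t = 0 := by
    intro t0
    by_contra h0
    have hEcont : Continuous E := hEdiff.continuous
    rcases lt_or_gt_of_ne h0 with hneg | hpos
    · -- E t0 < 0 : go to -∞
      set T : ℝ := t0 - (2 * D + 1) / (-E t0) with hT
      have hq : 0 < (2 * D + 1) / (-E t0) := by
        apply div_pos (by linarith) (by linarith)
      have hTle : T ≤ t0 := by simp only [hT]; linarith
      have hEi : IntervalIntegrable E volume T t0 := hEcont.intervalIntegrable _ _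
      have h1 : G t0 - G T = ∫ s in T..t0, E s :=
        (intervalIntegral.integral_eq_sub_of_hasDerivAt (fun s _ => hG' s) hEi).symm
      have h2 : (∫ s in T..t0, E s) ≤ ∫ s in T..t0, (fun _ => E t0) s :=
        intervalIntegral.integral_mono_on hTle hEi intervalIntegrable_const
          (fun s hs => hEmono hs.2)
      have h3 : (∫ s in T..t0, (fun _ => E t0) s) = -(2 * D + 1) := by
        rw [intervalIntegral.integral_const, smul_eq_mul]
        have h6 : t0 - T = (2 * D + 1) / (-E t0) := by simp [hT]
        have hne : E t0 ≠ 0 := ne_of_lt hneg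
        have h7 := div_mul_cancel₀ (2 * D + 1) (neg_ne_zero.mpr hne)
        rw [h6]
        calc (2 * D + 1) / (-E t0) * E t0
            = -((2 * D + 1) / (-E t0) * (-E t0)) := by ring
          _ = -(2 * D + 1) := by rw [h7]
      have h4 := abs_le.1 (hGb T)
      have h5 := abs_le.1 (hGb t0)
      rw [h3] at h2
      linarith
    · -- E t0 > 0 : go to +∞
      set T : ℝ := t0 + (2 * D + 1) / (E t0) with hT
      have hq : 0 < (2 * D + 1) / (E t0) := by
        apply div_pos (by linarith) hpos
      have hTle : t0 ≤ T := by simp only [hT]; linarith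
      have hEi : IntervalIntegrable E volume t0 T := hEcont.intervalIntegrable _ _
      have h1 : G T - G t0 = ∫ s in t0..T, E s :=
        (intervalIntegral.integral_eq_sub_of_hasDerivAt (fun s _ => hG' s) hEi).symm
      have h2 : (∫ s in t0..T, (fun _ => E t0) s) ≤ ∫ s in t0..T, E s :=
        intervalIntegral.integral_mono_on hTle intervalIntegrable_const hEi
          (fun s hs => hEmono hs.1)
      have h3 : (∫ s in t0..T, (fun _ => E t0) s) = 2 * D + 1 := by
        rw [intervalIntegral.integral_const, smul_eq_mul]
        have h6 : T - t0 = (2 * D + 1) / (E t0) := by simp [hT]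
        have hne : E t0 ≠ 0 := ne_of_gt hpos
        rw [h6, div_mul_cancel₀ (2 * D + 1) hne]
      have h4 := abs_le.1 (hGb T)
      have h5 := abs_le.1 (hGb t0)
      rw [h3] at h2
      linarith
  -- hence P vanishes identically
  have hP0 : ∀ t, P t = 0 := by
    intro t
    have h1 : HasDerivAt E (P t) t := hE' t
    have h2 : E = fun _ => (0 : ℝ) := funext hE0
    rw [h2] at h1
    exact h1.unique (hasDerivAt_const t 0)
  -- pointwise vanishing of the time derivative
  have hu0 : ∀ t x, ptime y t x = 0 := by
    intro t x0
    by_contra h0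
    set f : ℝ → ℝ := fun x => (ptime y t x) ^ p with hfdef
    have hfc : Continuous f := (hptc.comp (continuous_const.prodMk continuous_id)).pow p
    have hfnn : ∀ x, 0 ≤ f x := fun x => hp.pow_nonneg _
    have hfper : Function.Periodic f (2 * Real.pi) := by
      intro x
      have he : (fun s => y (s, x + 2 * Real.pi)) = fun s => y (s, x) :=
        funext fun s => hper s x
      simp only [hfdef, ptime, he]
    have hfpos : 0 < f x0 := (hfnn x0).lt_of_ne' (pow_ne_zero p h0)
    obtain ⟨ε, hε, hball⟩ : ∃ ε > 0, ∀ x, |x - x0| < ε → 0 < f x := by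
      have hev : ∀ᶠ x in nhds x0, 0 < f x :=
        (hfc.continuousAt).preimage_mem_nhds (Ioi_mem_nhds hfpos)
      rcases Metric.eventually_nhds_iff.1 hev with ⟨ε, hε, hb⟩
      exact ⟨ε, hε, fun x hx => hb (by simpa [Real.dist_eq] using hx)⟩
    set δ : ℝ := min (ε / 2) (Real.pi / 2) with hδdef
    have hδpos : 0 < δ := lt_min (by linarith) (by linarith)
    have hδε : δ < ε := lt_of_le_of_lt (min_le_left _ _) (by linarith)
    have hδπ : δ < Real.pi := lt_of_le_of_lt (min_le_right _ _) (by linarith)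
    -- the integral of f over a period centered at x0 vanishes
    have hint0 : (∫ x in (x0 - Real.pi)..(x0 + Real.pi), f x) = 0 := by
      have := hfper.intervalIntegral_add_eq (x0 - Real.pi) 0
      have he1 : x0 - Real.pi + (2 * Real.pi) = x0 + Real.pi := by ring
      rw [he1, zero_add] at this
      rw [this]
      exact hP0 t
    have hi1 : IntervalIntegrable f volume (x0 - Real.pi) (x0 - δ) :=
      hfc.intervalIntegrable _ _
    have hi2 : IntervalIntegrable f volume (x0 - δ) (x0 + δ) :=
      hfc.intervalIntegrable _ _
    have hi3 : IntervalIntegrable f volume (x0 + δ) (x0 + Real.pi) :=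
      hfc.intervalIntegrable _ _
    have hsplit : (∫ x in (x0 - Real.pi)..(x0 + Real.pi), f x)
        = (∫ x in (x0 - Real.pi)..(x0 - δ), f x) + (∫ x in (x0 - δ)..(x0 + δ), f x)
          + ∫ x in (x0 + δ)..(x0 + Real.pi), f x := by
      rw [intervalIntegral.integral_add_adjacent_intervals hi1 hi2,
        intervalIntegral.integral_add_adjacent_intervals (hi1.trans hi2) hi3]
    have hn1 : 0 ≤ ∫ x in (x0 - Real.pi)..(x0 - δ), f x :=
      intervalIntegral.integral_nonneg (by linarith) (fun x _ => hfnn x)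
    have hn3 : 0 ≤ ∫ x in (x0 + δ)..(x0 + Real.pi), f x :=
      intervalIntegral.integral_nonneg (by linarith) (fun x _ => hfnn x)
    have hmid : 0 < ∫ x in (x0 - δ)..(x0 + δ), f x := by
      apply intervalIntegral.intervalIntegral_pos_of_pos_on hi2
      · intro x hx
        apply hball
        rw [abs_lt]
        constructor <;> [linarith [hx.1]; linarith [hx.2]]
      · linarith
    rw [hsplit] at hint0
    linarith
  -- y does not depend on t
  have hyt : ∀ x t t', y (t, x) = y (t', x) := by
    intro x
    apply is_const_of_deriv_eq_zero
    · exact fun s => (hptd s x).differentiableAt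
    · intro s
      have := hu0 s x
      simpa [ptime] using this
  -- the space second derivative vanishes
  have hps2_0 : ∀ t x, pspace2 y t x = 0 := by
    intro t x
    have h1 := heq t x
    have h2 : ptime2 y t x = 0 := by
      have he : (fun s => ptime y s x) = fun _ => (0 : ℝ) := funext fun s => hu0 s x
      rw [ptime2, he, deriv_const]
    rw [h2, hu0 t x, zero_pow hp0.ne'] at h1
    linarith
  -- the space derivative is constant in x
  have hc : ∀ t x, pspace y t x = pspace y t 0 := by
    intro t x
    exact is_const_of_deriv_eq_zero (fun s => (hps2d t s).differentiableAt)
      (fun s => by have := hps2_0 t s; simpa [pspace2] using this) x 0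
  -- and it must vanish by periodicity
  have hx0 : ∀ t x, y (t, x) = y (t, 0) := by
    intro t
    have hcz : pspace y t 0 = 0 := by
      set c : ℝ := pspace y t 0 with hcdef
      have hg : ∀ x : ℝ, HasDerivAt (fun s => y (t, s) - c * s) 0 x := by
        intro x
        have h1 := (hpsd t x).sub ((hasDerivAt_id x).const_mul c)
        have h2 : pspace y t x - c * 1 = 0 := by rw [hc t x]; ring
        rwa [h2] at h1
      have hconst := is_const_of_deriv_eq_zero (f := fun s => y (t, s) - c * s)
        (fun s => (hg s).differentiableAt) (fun s => (hg s).deriv) (2 * Real.pi) 0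
      have hp2 : y (t, 2 * Real.pi) = y (t, 0) := by
        have := hper t 0
        simpa using this
      have hmul : c * (2 * Real.pi) = 0 := by
        simp only [mul_zero, sub_zero] at hconst
        linarith [hconst, hp2]
      rcases mul_eq_zero.1 hmul with h | h
      · exact h
      · exact absurd h (by positivity)
    intro x
    exact is_const_of_deriv_eq_zero (fun s => (hpsd t s).differentiableAt)
      (fun s => by
        have h1 := (hpsd t s).deriv
        rw [h1, hc t s, hcz]) x 0
  intro t x t' x'
  rw [hx0 t x, hx0 t' x', hyt 0 t t']
end
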